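/- arXiv:2011.10980 — 5 statements merged into one kernel-verified Lean document; each statement's English description precedes it below -/
import Mathlib

section
/- Let p be a prime, m ≥ 1, and χ a principal Dirichlet character modulo p^m (conductor 1). For every integer s ≥ 0, ∑ gcd(a₁+a₂-1, b₁,…,b_s, p^m) over a₁,a₂ units mod p^m with a₁+a₂ a unit and b₁,…,b_s ∈ ℤ/p^mℤ, equals φ₂(p^m)·σ_s(p^m). -/
/-- `phi2 n` counts pairs `(a₁, a₂)` of residues mod `n` (represented by
`1 ≤ a₁, a₂ ≤ n`) such that `a₁`, `a₂` and `a₁ + a₂` are all units mod `n`. -/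
def phi2 (n : ℕ) : ℕ :=
  ((Finset.Icc 1 n ×ˢ Finset.Icc 1 n).filter
    (fun p => Nat.gcd (p.1 * p.2) n = 1 ∧ Nat.gcd (p.1 + p.2) n = 1)).card

open Finset

lemma card_Ioc_modEq {q n : ℕ} (hq : 0 < q) (hqn : q ∣ n) (v : ℕ) :
    ((Finset.Ioc 0 n).filter (fun x => x ≡ v [MOD q])).card = n / q := by
  obtain ⟨k, rfl⟩ := hqn
  have h := Nat.Ioc_filter_modEq_card 0 (q * k) hq v
  have h1 : ((q*k : ℕ) - (v:ℚ))/q = k + ((0:ℕ) - (v:ℚ))/q := by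
    field_simp
    push_cast; ring
  rw [h1] at h
  rw [show ((k:ℚ)) = ((k:ℤ):ℚ) by push_cast; ring, Int.floor_intCast_add] at h
  have : (((Finset.Ioc 0 (q*k)).filter (fun x => x ≡ v [MOD q])).card : ℤ) = k := by
    rw [h]; omega
  have hk : q * k / q = k := by
    rw [Nat.mul_div_cancel_left _ hq]
  omega

lemma card_Ioc_not_modEq_two {p n : ℕ} (hp : 0 < p) (hpn : p ∣ n) {v₁ v₂ : ℕ}
    (hv : ¬ v₁ ≡ v₂ [MOD p]) :
    ((Finset.Ioc 0 n).filter (fun x => ¬ x ≡ v₁ [MOD p] ∧ ¬ x ≡ v₂ [MOD p])).card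
      = n - 2 * (n / p) := by
  classical
  set S := Finset.Ioc 0 n with hS
  have hA := card_Ioc_modEq hp hpn v₁
  have hB := card_Ioc_modEq hp hpn v₂
  have hdisj : Disjoint (S.filter (fun x => x ≡ v₁ [MOD p]))
      (S.filter (fun x => x ≡ v₂ [MOD p])) := by
    rw [Finset.disjoint_left]
    intro x hx hy
    exact hv (((mem_filter.mp hx).2.symm.trans (mem_filter.mp hy).2))
  have heq : S.filter (fun x => ¬ x ≡ v₁ [MOD p] ∧ ¬ x ≡ v₂ [MOD p])
      = S \ (S.filter (fun x => x ≡ v₁ [MOD p]) ∪ S.filter (fun x => x ≡ v₂ [MOD p])) := by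
    ext x
    simp only [mem_filter, mem_sdiff, mem_union]
    tauto
  have hsub : (S.filter (fun x => x ≡ v₁ [MOD p]) ∪ S.filter (fun x => x ≡ v₂ [MOD p])) ⊆ S := by
    intro x hx
    rcases mem_union.mp hx with h | h <;> exact (mem_filter.mp h).1
  rw [heq, card_sdiff_of_subset hsub, card_union_of_disjoint hdisj, hA, hB]
  have hcard : S.card = n := by simp [hS]
  have : n / p + n / p ≤ n := by
    have := Nat.div_le_self n p
    have h2 : n / p + n / p ≤ n := by
      obtain ⟨k, rfl⟩ := hpn
      rw [Nat.mul_div_cancel_left _ hp]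
      have hp2 : 2 ≤ p := by
        by_contra hlt
        interval_cases p
        exact hv (Nat.modEq_one)
      nlinarith [hp2]
    exact h2
  omega

lemma menonInnerSum (n : ℕ) (s : ℕ) (c : ℕ) (hn : n ≠ 0) (hc : c ≠ 0) :
    ∑ b ∈ Fintype.piFinset (fun _ : Fin s => Finset.Ioc 0 n),
      Nat.gcd c (Nat.gcd (Finset.univ.gcd b) n)
    = ∑ d ∈ n.divisors, (if d ∣ c then d.totient * (n / d) ^ s else 0) := by
  classical
  have key : ∀ b : Fin s → ℕ, Nat.gcd c (Nat.gcd (Finset.univ.gcd b) n)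
      = ∑ d ∈ n.divisors, if d ∣ c ∧ ∀ i, d ∣ b i then d.totient else 0 := by
    intro b
    set g := Nat.gcd c (Nat.gcd (Finset.univ.gcd b) n) with hg
    have hgn : g ∣ n := (Nat.gcd_dvd_right _ _).trans (Nat.gcd_dvd_right _ _)
    have hg0 : g ≠ 0 := fun h => hc (by simpa using (Nat.gcd_eq_zero_iff.mp (hg ▸ h)).1)
    have hdiv : g.divisors = n.divisors.filter (fun d => d ∣ c ∧ ∀ i, d ∣ b i) := by
      ext d
      simp only [Nat.mem_divisors, Finset.mem_filter]
      constructor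
      · intro ⟨hdg, _⟩
        have h1 : d ∣ c := hdg.trans (Nat.gcd_dvd_left _ _)
        have h2 : d ∣ Finset.univ.gcd b :=
          hdg.trans ((Nat.gcd_dvd_right _ _).trans (Nat.gcd_dvd_left _ _))
        exact ⟨⟨hdg.trans hgn, hn⟩, h1, fun i => Finset.dvd_gcd_iff.mp h2 i (Finset.mem_univ i)⟩
      · intro ⟨⟨hdn, _⟩, hdc, hdb⟩
        exact ⟨Nat.dvd_gcd hdc (Nat.dvd_gcd (Finset.dvd_gcd fun i _ => hdb i) hdn), hg0⟩
    conv_lhs => rw [← Nat.sum_totient g, hdiv, Finset.sum_filter]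
  rw [Finset.sum_congr rfl (fun b _ => key b), Finset.sum_comm]
  refine Finset.sum_congr rfl fun d hd => ?_
  by_cases hdc : d ∣ c
  · simp only [hdc, true_and, if_true]
    have step : ∀ b : Fin s → ℕ, (if (∀ i, d ∣ b i) then d.totient else 0)
        = d.totient * ∏ i, (if d ∣ b i then 1 else 0) := by
      intro b
      rw [Fintype.prod_boole]
      split <;> simp
    rw [Finset.sum_congr rfl fun b _ => step b, ← Finset.mul_sum]
    congr 1
    have hx : (∑ x ∈ Finset.Ioc 0 n, if d ∣ x then (1:ℕ) else 0) = n / d := by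
      simp only [Finset.sum_boole, Nat.cast_id]
      exact Nat.Ioc_filter_dvd_card_eq_div n d
    calc ∑ b ∈ Fintype.piFinset (fun _ : Fin s => Finset.Ioc 0 n),
          ∏ i, (if d ∣ b i then (1:ℕ) else 0)
        = ∏ _i : Fin s, ∑ x ∈ Finset.Ioc 0 n, (if d ∣ x then (1:ℕ) else 0) :=
          (Finset.prod_univ_sum (fun _ : Fin s => Finset.Ioc 0 n) (fun _ x => if d ∣ x then (1:ℕ) else 0)).symm
      _ = (n / d) ^ s := by
          rw [Finset.prod_congr rfl fun i _ => hx, Finset.prod_const, Finset.card_univ,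
            Fintype.card_fin]
  · simp [hdc]

lemma card_Ioc_not_modEq {p n : ℕ} (hp : 0 < p) (hpn : p ∣ n) (v : ℕ) :
    ((Finset.Ioc 0 n).filter (fun x => ¬ x ≡ v [MOD p])).card = n - n / p := by
  have h := Finset.card_filter_add_card_filter_not
    (s := Finset.Ioc 0 n) (p := fun x => x ≡ v [MOD p])
  rw [card_Ioc_modEq hp hpn v] at h
  have h2 : (Finset.Ioc 0 n).card = n := by simp
  have h3 : n / p ≤ n := Nat.div_le_self n p
  omega

section Units
variable {p m : ℕ} (hp : p.Prime) (hm : 1 ≤ m)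

lemma unit_iff (hp : p.Prime) (hm : 1 ≤ m) (x : ℕ) :
    Nat.gcd x (p ^ m) = 1 ↔ ¬ p ∣ x := by
  have : Nat.Coprime x (p ^ m) ↔ Nat.Coprime x p := Nat.coprime_pow_right_iff hm x p
  rw [show (Nat.gcd x (p ^ m) = 1) ↔ Nat.Coprime x (p ^ m) from Iff.rfl, this,
    Nat.coprime_comm]
  exact hp.coprime_iff_not_dvd

/-- `p ∣ a₁ + a₂` as a congruence condition on `a₂`. -/
lemma dvd_add_iff_modEq (hp : 0 < p) (a₁ a₂ : ℕ) :
    p ∣ a₁ + a₂ ↔ a₂ ≡ p * a₁ - a₁ [MOD p] := by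
  have ha : a₁ ≤ p * a₁ := Nat.le_mul_of_pos_left a₁ hp
  have h0 : p ∣ p * a₁ - a₁ + a₁ := by
    rw [Nat.sub_add_cancel ha]; exact Dvd.intro a₁ rfl
  constructor
  · intro h
    have h1 : a₂ + a₁ ≡ 0 [MOD p] := (Nat.modEq_zero_iff_dvd).mpr (by rwa [Nat.add_comm])
    have h2 : p * a₁ - a₁ + a₁ ≡ 0 [MOD p] := (Nat.modEq_zero_iff_dvd).mpr h0
    exact Nat.ModEq.add_right_cancel' a₁ (h1.trans h2.symm)
  · intro h
    have h1 : a₂ + a₁ ≡ p * a₁ - a₁ + a₁ [MOD p] := h.add_right a₁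
    have h2 : p ∣ a₂ + a₁ :=
      (Nat.modEq_zero_iff_dvd).mp (h1.trans ((Nat.modEq_zero_iff_dvd).mpr h0))
    rwa [Nat.add_comm] at h2

/-- The inner count with no divisibility condition. -/
lemma inner_count_base (hp : p.Prime) (hm : 1 ≤ m) {a₁ : ℕ} (ha₁ : ¬ p ∣ a₁) :
    ((Finset.Ioc 0 (p ^ m)).filter
      (fun a₂ => Nat.gcd a₂ (p ^ m) = 1 ∧ Nat.gcd (a₁ + a₂) (p ^ m) = 1)).card
      = p ^ m - 2 * (p ^ m / p) := by
  have hpn : p ∣ p ^ m := dvd_pow_self p (by omega)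
  have hv : ¬ (0 : ℕ) ≡ p * a₁ - a₁ [MOD p] := by
    intro h
    have h1 : p ∣ p * a₁ - a₁ := (Nat.modEq_zero_iff_dvd).mp h.symm
    have ha : a₁ ≤ p * a₁ := Nat.le_mul_of_pos_left a₁ hp.pos
    have : p ∣ p * a₁ - (p * a₁ - a₁) := Nat.dvd_sub (Dvd.intro a₁ rfl) h1
    rw [Nat.sub_sub_self ha] at this
    exact ha₁ this
  have hcong : ∀ a₂ : ℕ,
      (Nat.gcd a₂ (p ^ m) = 1 ∧ Nat.gcd (a₁ + a₂) (p ^ m) = 1) ↔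
      (¬ a₂ ≡ 0 [MOD p] ∧ ¬ a₂ ≡ p * a₁ - a₁ [MOD p]) := by
    intro a₂
    rw [unit_iff hp hm, unit_iff hp hm, dvd_add_iff_modEq hp.pos a₁ a₂]
    constructor
    · rintro ⟨h1, h2⟩
      exact ⟨fun h => h1 ((Nat.modEq_zero_iff_dvd).mp h), h2⟩
    · rintro ⟨h1, h2⟩
      exact ⟨fun h => h1 ((Nat.modEq_zero_iff_dvd).mpr h), h2⟩
  rw [Finset.filter_congr (fun a₂ _ => hcong a₂)]
  exact card_Ioc_not_modEq_two hp.pos hpn hv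

lemma card_units (hp : p.Prime) (hm : 1 ≤ m) :
    ((Finset.Ioc 0 (p ^ m)).filter (fun a => Nat.gcd a (p ^ m) = 1)).card
      = p ^ m - p ^ m / p := by
  have hpn : p ∣ p ^ m := dvd_pow_self p (by omega)
  have hcong : ∀ a : ℕ, (Nat.gcd a (p ^ m) = 1) ↔ ¬ a ≡ 0 [MOD p] := by
    intro a
    rw [unit_iff hp hm]
    exact not_congr (Nat.modEq_zero_iff_dvd).symm
  rw [Finset.filter_congr (fun a _ => hcong a)]
  exact card_Ioc_not_modEq hp.pos hpn 0

end Units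

lemma phi2_eq {p m : ℕ} (hp : p.Prime) (hm : 1 ≤ m) :
    phi2 (p ^ m) = (p ^ m - p ^ m / p) * (p ^ m - 2 * (p ^ m / p)) := by
  classical
  have hIcc : Finset.Icc 1 (p ^ m) = Finset.Ioc 0 (p ^ m) := by
    ext x; simp only [Finset.mem_Icc, Finset.mem_Ioc]; omega
  unfold phi2
  rw [hIcc, Finset.card_filter, Finset.sum_product]
  have hsplit : ∀ a₁ a₂ : ℕ,
      (Nat.gcd (a₁ * a₂) (p ^ m) = 1 ∧ Nat.gcd (a₁ + a₂) (p ^ m) = 1) ↔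
      (Nat.gcd a₁ (p ^ m) = 1 ∧ (Nat.gcd a₂ (p ^ m) = 1 ∧ Nat.gcd (a₁ + a₂) (p ^ m) = 1)) := by
    intro a₁ a₂
    have h := Nat.coprime_mul_iff_left (m := a₁) (n := a₂) (k := p ^ m)
    unfold Nat.Coprime at h
    rw [h]; tauto
  have inner' : ∀ a₁ ∈ Finset.Ioc 0 (p ^ m),
      (∑ a₂ ∈ Finset.Ioc 0 (p ^ m),
        if (Nat.gcd (a₁ * a₂) (p ^ m) = 1 ∧ Nat.gcd (a₁ + a₂) (p ^ m) = 1) then 1 else 0)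
      = if Nat.gcd a₁ (p ^ m) = 1 then (p ^ m - 2 * (p ^ m / p)) else 0 := by
    intro a₁ _
    by_cases hA : Nat.gcd a₁ (p ^ m) = 1
    · rw [if_pos hA]
      have hiff : ∀ a₂ : ℕ,
          (Nat.gcd (a₁ * a₂) (p ^ m) = 1 ∧ Nat.gcd (a₁ + a₂) (p ^ m) = 1) ↔
          (Nat.gcd a₂ (p ^ m) = 1 ∧ Nat.gcd (a₁ + a₂) (p ^ m) = 1) := by
        intro a₂; rw [hsplit a₁ a₂]; tauto
      rw [Finset.sum_congr rfl fun a₂ _ => if_congr (hiff a₂) rfl rfl]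
      simp only [Finset.sum_boole, Nat.cast_id]
      exact inner_count_base hp hm ((unit_iff hp hm a₁).mp hA)
    · rw [if_neg hA]
      apply Finset.sum_eq_zero
      intro a₂ _
      rw [if_neg]
      intro hcon
      exact hA ((hsplit a₁ a₂).mp hcon).1
  rw [Finset.sum_congr rfl inner', ← Finset.sum_filter, Finset.sum_const, smul_eq_mul,
    card_units hp hm]

lemma keyD {p m : ℕ} (hp : p.Prime) (hm : 1 ≤ m) {j : ℕ} (hj : 1 ≤ j) (hjm : j ≤ m) :
    ∑ a₁ ∈ (Finset.Ioc 0 (p ^ m)).filter (fun a => Nat.gcd a (p ^ m) = 1),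
      ((Finset.Ioc 0 (p ^ m)).filter
        (fun a₂ => (Nat.gcd a₂ (p ^ m) = 1 ∧ Nat.gcd (a₁ + a₂) (p ^ m) = 1) ∧
          p ^ j ∣ a₁ + a₂ - 1)).card
    = (p ^ m - 2 * (p ^ m / p)) * (p ^ m / p ^ j) := by
  classical
  have hq : 0 < p ^ j := pow_pos hp.pos j
  have hqn : p ^ j ∣ p ^ m := pow_dvd_pow p hjm
  have hpq : p ∣ p ^ j := dvd_pow_self p (by omega)
  have hpn : p ∣ p ^ m := dvd_pow_self p (by omega)
  have h1lt := hp.one_lt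
  have inner' : ∀ a₁ ∈ (Finset.Ioc 0 (p ^ m)).filter (fun a => Nat.gcd a (p ^ m) = 1),
      ((Finset.Ioc 0 (p ^ m)).filter
        (fun a₂ => (Nat.gcd a₂ (p ^ m) = 1 ∧ Nat.gcd (a₁ + a₂) (p ^ m) = 1) ∧
          p ^ j ∣ a₁ + a₂ - 1)).card
      = if ¬ p ∣ a₁ - 1 then p ^ m / p ^ j else 0 := by
    intro a₁ ha₁
    obtain ⟨ha₁mem, ha₁u⟩ := Finset.mem_filter.mp ha₁
    have ha₁pos : 0 < a₁ := (Finset.mem_Ioc.mp ha₁mem).1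
    have hnd : ¬ p ∣ a₁ := (unit_iff hp hm a₁).mp ha₁u
    by_cases hA : p ∣ a₁ - 1
    · rw [if_neg (by simpa using hA)]
      rw [Finset.card_eq_zero, Finset.filter_eq_empty_iff]
      intro a₂ _
      rintro ⟨⟨h2, h3⟩, h4⟩
      have hpd : p ∣ a₁ + a₂ - 1 := hpq.trans h4
      have hda : p ∣ a₂ := by
        have h5 := Nat.dvd_sub hpd hA
        have he : a₁ + a₂ - 1 - (a₁ - 1) = a₂ := by omega
        rwa [he] at h5
      exact (unit_iff hp hm a₂).mp h2 hda
    · rw [if_pos (by simpa using hA)]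
      set v := p ^ j * a₁ - (a₁ - 1) with hv
      have hva : a₁ - 1 ≤ p ^ j * a₁ := le_trans (by omega) (Nat.le_mul_of_pos_left a₁ hq)
      have hveq : v + (a₁ - 1) = p ^ j * a₁ := Nat.sub_add_cancel hva
      have hvz : v + (a₁ - 1) ≡ 0 [MOD p ^ j] :=
        (Nat.modEq_zero_iff_dvd).mpr (hveq ▸ Dvd.intro a₁ rfl)
      have hmain : ∀ a₂ ∈ Finset.Ioc 0 (p ^ m),
          ((Nat.gcd a₂ (p ^ m) = 1 ∧ Nat.gcd (a₁ + a₂) (p ^ m) = 1) ∧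
            p ^ j ∣ a₁ + a₂ - 1) ↔ a₂ ≡ v [MOD p ^ j] := by
        intro a₂ ha₂
        have ha₂pos : 0 < a₂ := (Finset.mem_Ioc.mp ha₂).1
        have heq : a₂ + (a₁ - 1) = a₁ + a₂ - 1 := by omega
        constructor
        · rintro ⟨-, h4⟩
          have h5 : a₂ + (a₁ - 1) ≡ 0 [MOD p ^ j] :=
            (Nat.modEq_zero_iff_dvd).mpr (heq ▸ h4)
          exact Nat.ModEq.add_right_cancel' (a₁ - 1) (h5.trans hvz.symm)
        · intro h
          have h4 : p ^ j ∣ a₁ + a₂ - 1 := by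
            have h5 : a₂ + (a₁ - 1) ≡ 0 [MOD p ^ j] := (h.add_right (a₁ - 1)).trans hvz
            rw [← heq]
            exact (Nat.modEq_zero_iff_dvd).mp h5
          have hpd : p ∣ a₁ + a₂ - 1 := hpq.trans h4
          have hsum : ¬ p ∣ a₁ + a₂ := by
            intro hc
            have h5 := Nat.dvd_sub hc hpd
            have he : a₁ + a₂ - (a₁ + a₂ - 1) = 1 := by omega
            rw [he] at h5
            have := Nat.dvd_one.mp h5
            omega
          have ha₂nd : ¬ p ∣ a₂ := by
            intro hc
            have h5 := Nat.dvd_sub hpd hc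
            have he : a₁ + a₂ - 1 - a₂ = a₁ - 1 := by omega
            rw [he] at h5
            exact hA h5
          exact ⟨⟨(unit_iff hp hm a₂).mpr ha₂nd, (unit_iff hp hm _).mpr hsum⟩, h4⟩
      rw [Finset.filter_congr hmain]
      exact card_Ioc_modEq hq hqn v
  rw [Finset.sum_congr rfl inner', ← Finset.sum_filter, Finset.filter_filter,
    Finset.sum_const, smul_eq_mul]
  congr 1
  have hcong : ∀ a ∈ Finset.Ioc 0 (p ^ m),
      (Nat.gcd a (p ^ m) = 1 ∧ ¬ p ∣ a - 1) ↔ (¬ a ≡ 0 [MOD p] ∧ ¬ a ≡ 1 [MOD p]) := by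
    intro a ha
    have hapos : 0 < a := (Finset.mem_Ioc.mp ha).1
    have e1 : p ∣ a ↔ a ≡ 0 [MOD p] := (Nat.modEq_zero_iff_dvd).symm
    have e2 : p ∣ a - 1 ↔ a ≡ 1 [MOD p] := by
      rw [← Nat.modEq_iff_dvd' hapos]
      exact ⟨Nat.ModEq.symm, Nat.ModEq.symm⟩
    rw [unit_iff hp hm, e1, e2]
  rw [Finset.filter_congr hcong]
  have hv01 : ¬ (0 : ℕ) ≡ 1 [MOD p] := by
    simp [Nat.ModEq, Nat.mod_eq_of_lt h1lt]
  exact card_Ioc_not_modEq_two hp.pos hpn hv01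

lemma key_count {p m : ℕ} (hp : p.Prime) (hm : 1 ≤ m) {d : ℕ} (hd : d ∣ p ^ m) :
    d.totient * ∑ a₁ ∈ (Finset.Ioc 0 (p ^ m)).filter (fun a => Nat.gcd a (p ^ m) = 1),
      ((Finset.Ioc 0 (p ^ m)).filter
        (fun a₂ => (Nat.gcd a₂ (p ^ m) = 1 ∧ Nat.gcd (a₁ + a₂) (p ^ m) = 1) ∧
          d ∣ a₁ + a₂ - 1)).card
    = phi2 (p ^ m) := by
  classical
  obtain ⟨j, hjm, rfl⟩ := (Nat.dvd_prime_pow hp).mp hd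
  rcases Nat.eq_zero_or_pos j with rfl | hj
  · simp only [pow_zero, Nat.totient_one, one_mul, one_dvd, and_true]
    rw [phi2_eq hp hm]
    have inner' : ∀ a₁ ∈ (Finset.Ioc 0 (p ^ m)).filter (fun a => Nat.gcd a (p ^ m) = 1),
        ((Finset.Ioc 0 (p ^ m)).filter
          (fun a₂ => Nat.gcd a₂ (p ^ m) = 1 ∧ Nat.gcd (a₁ + a₂) (p ^ m) = 1)).card
        = p ^ m - 2 * (p ^ m / p) := fun a₁ ha₁ =>
      inner_count_base hp hm ((unit_iff hp hm a₁).mp (Finset.mem_filter.mp ha₁).2)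
    rw [Finset.sum_congr rfl inner', Finset.sum_const, smul_eq_mul, card_units hp hm]
  · rw [keyD hp hm hj hjm, phi2_eq hp hm]
    have h1 : Nat.totient (p ^ j) = p ^ (j - 1) * (p - 1) := Nat.totient_prime_pow hp hj
    have h2 : p ^ m / p ^ j = p ^ (m - j) := Nat.pow_div hjm hp.pos
    have h3 : p ^ m / p = p ^ (m - 1) := by
      rw [← Nat.pow_div hm hp.pos, pow_one]
    rw [h1, h2, h3]
    have h4 : p ^ (j - 1) * (p - 1) * p ^ (m - j) = p ^ m - p ^ (m - 1) := by
      have h5 : p ^ (j - 1) * p ^ (m - j) = p ^ (m - 1) := by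
        rw [← pow_add]
        congr 1
        omega
      have hm1 : p ^ m = p * p ^ (m - 1) := by
        calc p ^ m = p ^ ((m - 1) + 1) := by congr 1; omega
          _ = p ^ (m - 1) * p := pow_succ p (m - 1)
          _ = p * p ^ (m - 1) := mul_comm _ _
      calc p ^ (j - 1) * (p - 1) * p ^ (m - j)
          = (p - 1) * (p ^ (j - 1) * p ^ (m - j)) := by ring
        _ = (p - 1) * p ^ (m - 1) := by rw [h5]
        _ = p * p ^ (m - 1) - 1 * p ^ (m - 1) := by rw [Nat.sub_mul]
        _ = p ^ m - p ^ (m - 1) := by rw [one_mul, ← hm1]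
    calc p ^ (j - 1) * (p - 1) * ((p ^ m - 2 * p ^ (m - 1)) * p ^ (m - j))
        = (p ^ (j - 1) * (p - 1) * p ^ (m - j)) * (p ^ m - 2 * p ^ (m - 1)) := by ring
      _ = (p ^ m - p ^ (m - 1)) * (p ^ m - 2 * p ^ (m - 1)) := by rw [h4]

/-- Prime-power case of the main theorem, principal character (conductor 1):
`∑ gcd(a₁+a₂-1, b₁, …, b_s, p^m) = φ₂(p^m) σ_s(p^m)`, summed over units
`a₁, a₂` mod `p^m` with `a₁+a₂` a unit, and `b₁, …, b_s` arbitrary mod `p^m`. -/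
theorem menon_sury_prime_power_principal (p m s : ℕ) (hp : p.Prime) (hm : 1 ≤ m)
    (χ : DirichletCharacter ℂ (p ^ m)) (hχ : χ.conductor = 1) :
    ∑ a₁ ∈ (Finset.Icc 1 (p ^ m)).filter (fun a => Nat.gcd a (p ^ m) = 1),
      ∑ a₂ ∈ (Finset.Icc 1 (p ^ m)).filter
          (fun a₂ => Nat.gcd a₂ (p ^ m) = 1 ∧ Nat.gcd (a₁ + a₂) (p ^ m) = 1),
        ∑ b ∈ Fintype.piFinset (fun _ : Fin s => Finset.Icc 1 (p ^ m)),
          Nat.gcd (a₁ + a₂ - 1) (Nat.gcd (Finset.univ.gcd b) (p ^ m))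
      = phi2 (p ^ m) * ∑ d ∈ (p ^ m).divisors, d ^ s := by
  classical
  clear hχ χ
  have hn : p ^ m ≠ 0 := (pow_pos hp.pos m).ne'
  have hIcc : Finset.Icc 1 (p ^ m) = Finset.Ioc 0 (p ^ m) := by
    ext x; simp only [Finset.mem_Icc, Finset.mem_Ioc]; omega
  rw [hIcc]
  calc ∑ a₁ ∈ (Finset.Ioc 0 (p ^ m)).filter (fun a => Nat.gcd a (p ^ m) = 1),
      ∑ a₂ ∈ (Finset.Ioc 0 (p ^ m)).filter
          (fun a₂ => Nat.gcd a₂ (p ^ m) = 1 ∧ Nat.gcd (a₁ + a₂) (p ^ m) = 1),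
        ∑ b ∈ Fintype.piFinset (fun _ : Fin s => Finset.Ioc 0 (p ^ m)),
          Nat.gcd (a₁ + a₂ - 1) (Nat.gcd (Finset.univ.gcd b) (p ^ m))
      = ∑ a₁ ∈ (Finset.Ioc 0 (p ^ m)).filter (fun a => Nat.gcd a (p ^ m) = 1),
          ∑ a₂ ∈ (Finset.Ioc 0 (p ^ m)).filter
              (fun a₂ => Nat.gcd a₂ (p ^ m) = 1 ∧ Nat.gcd (a₁ + a₂) (p ^ m) = 1),
            ∑ d ∈ (p ^ m).divisors,
              (if d ∣ a₁ + a₂ - 1 then d.totient * (p ^ m / d) ^ s else 0) := by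
        refine Finset.sum_congr rfl fun a₁ ha₁ => Finset.sum_congr rfl fun a₂ ha₂ => ?_
        have h1 : 1 ≤ a₁ := (Finset.mem_Ioc.mp (Finset.mem_filter.mp ha₁).1).1
        have h2 : 1 ≤ a₂ := (Finset.mem_Ioc.mp (Finset.mem_filter.mp ha₂).1).1
        exact menonInnerSum (p ^ m) s (a₁ + a₂ - 1) hn (by omega)
    _ = ∑ d ∈ (p ^ m).divisors,
          ∑ a₁ ∈ (Finset.Ioc 0 (p ^ m)).filter (fun a => Nat.gcd a (p ^ m) = 1),
            ∑ a₂ ∈ (Finset.Ioc 0 (p ^ m)).filter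
                (fun a₂ => Nat.gcd a₂ (p ^ m) = 1 ∧ Nat.gcd (a₁ + a₂) (p ^ m) = 1),
              (if d ∣ a₁ + a₂ - 1 then d.totient * (p ^ m / d) ^ s else 0) := by
        rw [← Finset.sum_comm]
        exact Finset.sum_congr rfl fun a₁ _ => Finset.sum_comm
    _ = ∑ d ∈ (p ^ m).divisors, phi2 (p ^ m) * (p ^ m / d) ^ s := by
        refine Finset.sum_congr rfl fun d hd => ?_
        have hdvd : d ∣ p ^ m := (Nat.mem_divisors.mp hd).1
        calc ∑ a₁ ∈ (Finset.Ioc 0 (p ^ m)).filter (fun a => Nat.gcd a (p ^ m) = 1),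
            ∑ a₂ ∈ (Finset.Ioc 0 (p ^ m)).filter
                (fun a₂ => Nat.gcd a₂ (p ^ m) = 1 ∧ Nat.gcd (a₁ + a₂) (p ^ m) = 1),
              (if d ∣ a₁ + a₂ - 1 then d.totient * (p ^ m / d) ^ s else 0)
            = ∑ a₁ ∈ (Finset.Ioc 0 (p ^ m)).filter (fun a => Nat.gcd a (p ^ m) = 1),
              (((Finset.Ioc 0 (p ^ m)).filter
                (fun a₂ => (Nat.gcd a₂ (p ^ m) = 1 ∧ Nat.gcd (a₁ + a₂) (p ^ m) = 1) ∧
                  d ∣ a₁ + a₂ - 1)).card * (d.totient * (p ^ m / d) ^ s)) := by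
              refine Finset.sum_congr rfl fun a₁ _ => ?_
              rw [← Finset.sum_filter, Finset.filter_filter, Finset.sum_const, smul_eq_mul]
          _ = (∑ a₁ ∈ (Finset.Ioc 0 (p ^ m)).filter (fun a => Nat.gcd a (p ^ m) = 1),
              ((Finset.Ioc 0 (p ^ m)).filter
                (fun a₂ => (Nat.gcd a₂ (p ^ m) = 1 ∧ Nat.gcd (a₁ + a₂) (p ^ m) = 1) ∧
                  d ∣ a₁ + a₂ - 1)).card) * (d.totient * (p ^ m / d) ^ s) := by
              rw [← Finset.sum_mul]
          _ = (d.totient * ∑ a₁ ∈ (Finset.Ioc 0 (p ^ m)).filter (fun a => Nat.gcd a (p ^ m) = 1),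
              ((Finset.Ioc 0 (p ^ m)).filter
                (fun a₂ => (Nat.gcd a₂ (p ^ m) = 1 ∧ Nat.gcd (a₁ + a₂) (p ^ m) = 1) ∧
                  d ∣ a₁ + a₂ - 1)).card) * (p ^ m / d) ^ s := by
              ring
          _ = phi2 (p ^ m) * (p ^ m / d) ^ s := by rw [key_count hp hm hdvd]
    _ = phi2 (p ^ m) * ∑ d ∈ (p ^ m).divisors, (p ^ m / d) ^ s := by rw [Finset.mul_sum]
    _ = phi2 (p ^ m) * ∑ d ∈ (p ^ m).divisors, d ^ s := by
        rw [Nat.sum_div_divisors (p ^ m) (fun d => d ^ s)]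
end

section
/- Let p be a prime, m ≥ 1, and χ a Dirichlet character modulo p^m with conductor exactly p (t = 1). For every integer s ≥ 0, ∑ gcd(a₁+a₂-1, b₁,…,b_s, p^m)·χ(a₁), over a₁,a₂ units mod p^m with a₁+a₂ a unit and b₁,…,b_s ∈ ℤ/p^mℤ, equals -φ(p^{2m-1})·σ_s(p^{m-1}). -/
open Finset


lemma count_dvd_shift (q n c : ℕ) (hq : 0 < q) (hqn : q ∣ n) :
    ((Finset.Ioc 0 n).filter (fun a => q ∣ (c + a))).card = n / q := by
  rw [← Finset.card_range (n / q)]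
  have hnq : q * (n / q) = n := Nat.mul_div_cancel' hqn
  have hc := Nat.div_add_mod c q
  have hcq : c % q < q := Nat.mod_lt _ hq
  have key : ∀ a, q ∣ c + a → q ∣ c % q + a := fun a h =>
    Nat.modEq_zero_iff_dvd.mp
      (((Nat.mod_modEq c q).add_right a).trans (Nat.modEq_zero_iff_dvd.mpr h))
  apply Finset.card_bij' (fun a _ => (c % q + a) / q - 1) (fun k _ => q * k + (q - c % q))
  · intro a ha
    simp only [mem_filter, mem_Ioc] at ha
    obtain ⟨⟨ha0, han⟩, hdvd⟩ := ha
    obtain ⟨K, hK⟩ := key a hdvd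
    rw [hK, Nat.mul_div_cancel_left _ hq]
    have hKle : K ≤ n / q := by
      by_contra h
      push_neg at h
      have h2 : q * (n / q + 1) ≤ q * K := Nat.mul_le_mul_left q h
      rw [Nat.mul_add, hnq, mul_one] at h2
      omega
    have hK0 : K ≠ 0 := by rintro rfl; simp at hK; omega
    simp only [mem_range]; omega
  · intro k hk
    simp only [mem_range] at hk
    have h2 : q * (k + 1) ≤ q * (n / q) := Nat.mul_le_mul_left q (by omega)
    rw [Nat.mul_add, mul_one, hnq] at h2
    have h3 : q * (k + 1 + c / q) = q * k + q + q * (c / q) := by ring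
    simp only [mem_filter, mem_Ioc]
    exact ⟨⟨by omega, by omega⟩, ⟨k + 1 + c / q, by omega⟩⟩
  · intro a ha
    simp only [mem_filter, mem_Ioc] at ha
    obtain ⟨⟨ha0, han⟩, hdvd⟩ := ha
    obtain ⟨K, hK⟩ := key a hdvd
    rw [hK, Nat.mul_div_cancel_left _ hq]
    have hK0 : K ≠ 0 := by rintro rfl; simp at hK; omega
    have h4 : q * (K - 1) + q = q * K := by rw [← Nat.mul_succ]; congr 1; omega
    omega
  · intro k hk
    have h5 : c % q + (q * k + (q - c % q)) = q * (k + 1) := by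
      have : q * (k + 1) = q * k + q := by ring
      omega
    rw [h5, Nat.mul_div_cancel_left _ hq]; omega


lemma gcd_eq_sum_totient (x n : ℕ) (hn : n ≠ 0) :
    Nat.gcd x n = ∑ d ∈ n.divisors.filter (· ∣ x), d.totient := by
  conv_lhs => rw [← Nat.sum_totient (Nat.gcd x n)]
  congr 1
  ext d
  have hg : Nat.gcd x n ≠ 0 := fun h => hn (Nat.eq_zero_of_gcd_eq_zero_right h)
  simp only [Nat.mem_divisors, Finset.mem_filter, Nat.dvd_gcd_iff]
  tauto

lemma sum_b (n s c : ℕ) (hn : n ≠ 0) :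
    ∑ b ∈ Fintype.piFinset (fun _ : Fin s => Finset.Icc 1 n),
        Nat.gcd c (Nat.gcd (Finset.univ.gcd b) n)
      = ∑ d ∈ n.divisors.filter (· ∣ c), d.totient * (n / d) ^ s := by
  have h1 : ∀ b : Fin s → ℕ,
      Nat.gcd c (Nat.gcd (Finset.univ.gcd b) n)
        = ∑ d ∈ n.divisors, if d ∣ c ∧ ∀ i, d ∣ b i then d.totient else 0 := by
    intro b
    rw [← Nat.gcd_assoc, gcd_eq_sum_totient _ _ hn, Finset.sum_filter]
    exact Finset.sum_congr rfl fun d _ =>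
      if_congr (by rw [Nat.dvd_gcd_iff, Finset.dvd_gcd_iff]; simp) rfl rfl
  simp only [h1]
  rw [Finset.sum_comm, Finset.sum_filter]
  refine Finset.sum_congr rfl fun d hd => ?_
  by_cases hc : d ∣ c
  · simp only [hc, true_and, if_true]
    have h2 : ∀ b : Fin s → ℕ, (if (∀ i, d ∣ b i) then d.totient else 0)
        = d.totient * ∏ i : Fin s, (if d ∣ b i then 1 else 0) := by
      intro b
      rw [Finset.prod_boole]
      simp only [Finset.mem_univ, forall_true_left]
      split <;> simp_all
    simp only [h2, ← Finset.mul_sum]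
    congr 1
    rw [← Finset.prod_univ_sum (fun _ : Fin s => Finset.Icc 1 n)
      (fun _ y => if d ∣ y then 1 else 0)]
    have h3 : ∑ x ∈ Finset.Icc 1 n, (if d ∣ x then 1 else 0) = n / d := by
      have hcard := Nat.Ioc_filter_dvd_card_eq_div n d
      rw [← Finset.Icc_add_one_left_eq_Ioc] at hcard
      rw [← hcard, zero_add]
      simp [Finset.sum_ite_eq, Finset.sum_filter]
    rw [Finset.prod_congr rfl fun i _ => h3, Finset.prod_const, Finset.card_univ,
      Fintype.card_fin]
  · simp [hc]


lemma sum_Ioc_cast {n : ℕ} [NeZero n] (f : ZMod n → ℂ) :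
    ∑ a ∈ Finset.Ioc 0 n, f (a : ZMod n) = ∑ x : ZMod n, f x := by
  have hn : 0 < n := Nat.pos_of_ne_zero (NeZero.ne n)
  refine Finset.sum_nbij' (fun a => ((a : ZMod n)))
    (fun x => if x.val = 0 then n else x.val) ?_ ?_ ?_ ?_ ?_
  · intro a _; exact Finset.mem_univ _
  · intro x _
    simp only [Finset.mem_Ioc]
    split
    · omega
    · exact ⟨Nat.pos_of_ne_zero (by assumption), (ZMod.val_lt x).le⟩
  · intro a ha
    simp only [Finset.mem_Ioc] at ha
    rw [ZMod.val_natCast]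
    rcases Nat.lt_or_ge a n with h | h
    · rw [Nat.mod_eq_of_lt h]
      split
      · omega
      · rfl
    · have ha' : a = n := by omega
      subst ha'
      simp
  · intro x _
    split
    · rename_i h
      have : x = 0 := (ZMod.val_eq_zero x).mp h
      simp [this]
    · rw [ZMod.natCast_val, ZMod.cast_id]
  · intro a _; rfl

lemma Icc_eq_Ioc (n : ℕ) : Finset.Icc 1 n = Finset.Ioc 0 n := by
  rw [← Finset.Icc_add_one_left_eq_Ioc, zero_add]

lemma sum_chi_eq_zero (p m : ℕ) (hp : p.Prime) (hm : 1 ≤ m)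
    (χ : DirichletCharacter ℂ (p ^ m)) (hχ : χ.conductor = p) :
    ∑ a ∈ (Finset.Icc 1 (p ^ m)).filter (fun a => Nat.gcd a (p ^ m) = 1),
      χ (a : ZMod (p ^ m)) = 0 := by
  have hn0 : (p : ℕ) ^ m ≠ 0 := pow_ne_zero _ hp.pos.ne'
  haveI : NeZero (p ^ m) := ⟨hn0⟩
  have hne : χ ≠ 1 := by
    intro h
    rw [h, DirichletCharacter.conductor_one] at hχ
    exact hp.one_lt.ne' hχ.symm
  rw [Finset.sum_filter_of_ne, Icc_eq_Ioc, sum_Ioc_cast]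
  · exact MulChar.sum_eq_zero_of_ne_one hne
  · intro x _ hx
    by_contra hco
    exact hx (χ.map_nonunit (fun hu => hco ((ZMod.isUnit_iff_coprime x (p ^ m)).mp hu)))

lemma sum_chi_cong_one (p m : ℕ) (hp : p.Prime) (hm : 1 ≤ m)
    (χ : DirichletCharacter ℂ (p ^ m)) (hχ : χ.conductor = p) :
    ∑ a ∈ (Finset.Icc 1 (p ^ m)).filter
        (fun a => Nat.gcd a (p ^ m) = 1 ∧ p ∣ a - 1),
      χ (a : ZMod (p ^ m)) = (p ^ (m - 1) : ℕ) := by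
  have hn0 : (p : ℕ) ^ m ≠ 0 := pow_ne_zero _ hp.pos.ne'
  haveI : NeZero (p ^ m) := ⟨hn0⟩
  have hft := χ.factorsThrough_conductor
  rw [hχ] at hft
  obtain ⟨hdvd, χ₀, hfac⟩ := hft
  have hone : ∀ a ∈ (Finset.Icc 1 (p ^ m)).filter
      (fun a => Nat.gcd a (p ^ m) = 1 ∧ p ∣ a - 1), χ (a : ZMod (p ^ m)) = 1 := by
    intro a ha
    simp only [Finset.mem_filter, Finset.mem_Icc] at ha
    obtain ⟨⟨ha1, _⟩, hco, hcong⟩ := ha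
    have hu : IsUnit ((a : ℕ) : ZMod (p ^ m)) :=
      (ZMod.isUnit_iff_coprime a (p ^ m)).mpr hco
    rw [hfac]
    rw [← hu.unit_spec, DirichletCharacter.changeLevel_eq_cast_of_dvd χ₀ hdvd hu.unit,
      hu.unit_spec, ZMod.cast_natCast hdvd]
    have : ((a : ℕ) : ZMod p) = 1 := by
      have ha' : a = (a - 1) + 1 := by omega
      rw [ha', Nat.cast_add, Nat.cast_one,
        (ZMod.natCast_eq_zero_iff (a - 1) p).mpr hcong, zero_add]
    rw [this, map_one]
  rw [Finset.sum_congr rfl hone, Finset.sum_const, nsmul_eq_mul, mul_one]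
  norm_cast
  have hset : (Finset.Icc 1 (p ^ m)).filter
      (fun a => Nat.gcd a (p ^ m) = 1 ∧ p ∣ a - 1)
      = (Finset.Ioc 0 (p ^ m)).filter (fun a => p ∣ (p - 1) + a) := by
    rw [← Icc_eq_Ioc]
    apply Finset.filter_congr
    intro a ha
    simp only [Finset.mem_Icc] at ha
    have hp1 := hp.one_lt
    constructor
    · rintro ⟨_, hc⟩
      have heq : p - 1 + a = (a - 1) + p := by omega
      rw [heq]
      exact Nat.dvd_add hc dvd_rfl
    · intro h
      have hc : p ∣ a - 1 := by
        have heq : a - 1 = (p - 1 + a) - p := by omega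
        rw [heq]
        exact Nat.dvd_sub h dvd_rfl
      refine ⟨?_, hc⟩
      have hpa : ¬ p ∣ a := by
        intro hpa
        have h1 : p ∣ a - (a - 1) := Nat.dvd_sub hpa hc
        have h2 : a - (a - 1) = 1 := by omega
        rw [h2] at h1
        have := Nat.le_of_dvd one_pos h1
        omega
      exact Nat.Coprime.pow_right _ ((Nat.coprime_comm).mp (hp.coprime_iff_not_dvd.mpr hpa))
  rw [hset, count_dvd_shift p _ (p - 1) hp.pos (dvd_pow_self p (by omega))]
  calc p ^ m / p = p ^ m / p ^ 1 := by rw [pow_one]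
    _ = p ^ (m - 1) := Nat.pow_div hm hp.pos

lemma gcd_pow_one_iff (p x m : ℕ) (hp : p.Prime) (hm : 0 < m) :
    Nat.gcd x (p ^ m) = 1 ↔ ¬ p ∣ x := by
  rw [show Nat.gcd x (p ^ m) = 1 ↔ Nat.Coprime x (p ^ m) from Iff.rfl,
    Nat.coprime_pow_right_iff hm, Nat.coprime_comm, hp.coprime_iff_not_dvd]

lemma pow_div_pow (p m j : ℕ) (hp : 0 < p) (hjm : j ≤ m) : p ^ m / p ^ j = p ^ (m - j) :=
  Nat.pow_div hjm hp

lemma card_B_dvd (p m j a₁ : ℕ) (hp : p.Prime) (hj : 1 ≤ j) (hjm : j ≤ m)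
    (ha₁ : 1 ≤ a₁) (h1 : ¬ p ∣ a₁ - 1) :
    (((Finset.Icc 1 (p ^ m)).filter
        (fun a₂ => Nat.gcd a₂ (p ^ m) = 1 ∧ Nat.gcd (a₁ + a₂) (p ^ m) = 1)).filter
      (fun a₂ => p ^ j ∣ a₁ + a₂ - 1)).card = p ^ (m - j) := by
  have hm : 0 < m := by omega
  rw [Finset.filter_filter]
  have hset : (Finset.Icc 1 (p ^ m)).filter
      (fun a₂ => (Nat.gcd a₂ (p ^ m) = 1 ∧ Nat.gcd (a₁ + a₂) (p ^ m) = 1)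
        ∧ p ^ j ∣ a₁ + a₂ - 1)
      = (Finset.Ioc 0 (p ^ m)).filter (fun a₂ => p ^ j ∣ (a₁ - 1) + a₂) := by
    rw [← Icc_eq_Ioc]
    apply Finset.filter_congr
    intro a₂ ha₂
    simp only [Finset.mem_Icc] at ha₂
    have he : a₁ + a₂ - 1 = (a₁ - 1) + a₂ := by omega
    rw [he]
    constructor
    · rintro ⟨_, h⟩; exact h
    · intro h
      have hpd : p ∣ (a₁ - 1) + a₂ := dvd_trans (dvd_pow_self p (by omega)) h
      have hna2 : ¬ p ∣ a₂ := by
        intro hd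
        apply h1
        have h2 := Nat.dvd_sub hpd hd
        rwa [Nat.add_sub_cancel] at h2
      have hnaa : ¬ p ∣ a₁ + a₂ := by
        intro hd
        have h2 := Nat.dvd_sub hd hpd
        have h3 : a₁ + a₂ - ((a₁ - 1) + a₂) = 1 := by omega
        rw [h3] at h2
        have := Nat.le_of_dvd one_pos h2
        have := hp.one_lt
        omega
      exact ⟨⟨(gcd_pow_one_iff p a₂ m hp hm).mpr hna2,
        (gcd_pow_one_iff p (a₁ + a₂) m hp hm).mpr hnaa⟩, h⟩
  rw [hset, count_dvd_shift (p ^ j) (p ^ m) (a₁ - 1) (pow_pos hp.pos j)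
    (pow_dvd_pow p hjm)]
  exact pow_div_pow p m j hp.pos hjm

lemma card_B_dvd_zero (p m j a₁ : ℕ) (hp : p.Prime) (hj : 1 ≤ j) (hm : 1 ≤ m)
    (ha₁ : 1 ≤ a₁) (h1 : p ∣ a₁ - 1) :
    (((Finset.Icc 1 (p ^ m)).filter
        (fun a₂ => Nat.gcd a₂ (p ^ m) = 1 ∧ Nat.gcd (a₁ + a₂) (p ^ m) = 1)).filter
      (fun a₂ => p ^ j ∣ a₁ + a₂ - 1)).card = 0 := by
  rw [Finset.card_eq_zero, Finset.eq_empty_iff_forall_notMem]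
  intro a₂ ha₂
  simp only [Finset.filter_filter, Finset.mem_filter, Finset.mem_Icc] at ha₂
  obtain ⟨⟨ha1, ha2⟩, ⟨hco, _⟩, hdvd⟩ := ha₂
  have hpd : p ∣ a₁ + a₂ - 1 := dvd_trans (dvd_pow_self p (by omega)) hdvd
  have he : a₁ + a₂ - 1 = (a₁ - 1) + a₂ := by omega
  rw [he] at hpd
  have hpa2 : p ∣ a₂ := by
    have h2 := Nat.dvd_sub hpd h1
    rwa [Nat.add_sub_cancel_left] at h2
  have hg : p ∣ Nat.gcd a₂ (p ^ m) := Nat.dvd_gcd hpa2 (dvd_pow_self p (by omega))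
  rw [hco] at hg
  have := Nat.le_of_dvd one_pos hg
  have := hp.one_lt
  omega

lemma card_B_one (p m a₁ : ℕ) (hp : p.Prime) (hm : 1 ≤ m) (ha : ¬ p ∣ a₁) :
    ((Finset.Icc 1 (p ^ m)).filter
        (fun a₂ => Nat.gcd a₂ (p ^ m) = 1 ∧ Nat.gcd (a₁ + a₂) (p ^ m) = 1)).card
      = p ^ m - 2 * p ^ (m - 1) := by
  have hm0 : 0 < m := hm
  have hset : (Finset.Icc 1 (p ^ m)).filter
      (fun a₂ => Nat.gcd a₂ (p ^ m) = 1 ∧ Nat.gcd (a₁ + a₂) (p ^ m) = 1)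
      = Finset.Ioc 0 (p ^ m) \
        (((Finset.Ioc 0 (p ^ m)).filter (fun a₂ => p ∣ a₂)) ∪
          ((Finset.Ioc 0 (p ^ m)).filter (fun a₂ => p ∣ a₁ + a₂))) := by
    rw [← Icc_eq_Ioc]
    ext a₂
    simp only [Finset.mem_filter, Finset.mem_sdiff, Finset.mem_union,
      gcd_pow_one_iff p _ m hp hm0]
    tauto
  rw [hset, Finset.card_sdiff_of_subset (Finset.union_subset (Finset.filter_subset _ _) (Finset.filter_subset _ _))]
  rw [Finset.card_union_of_disjoint (by
    rw [Finset.disjoint_filter]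
    intro x hx h2 h3
    exact ha (by
      have := Nat.dvd_sub h3 h2
      rwa [Nat.add_sub_cancel] at this))]
  rw [Nat.Ioc_filter_dvd_card_eq_div, count_dvd_shift p (p ^ m) a₁ hp.pos
    (dvd_pow_self p (by omega))]
  have h1 : p ^ m / p = p ^ (m - 1) := by
    calc p ^ m / p = p ^ m / p ^ 1 := by rw [pow_one]
      _ = p ^ (m - 1) := Nat.pow_div hm hp.pos
  rw [h1, Nat.card_Ioc]
  omega


/-- Prime-power case of the main theorem, conductor exactly `p` (`t = 1`):
`∑ gcd(a₁+a₂-1, b₁, …, b_s, p^m) χ(a₁) = -φ(p^{2m-1}) σ_s(p^{m-1})`. -/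
theorem menon_sury_prime_power_conductor_p (p m s : ℕ) (hp : p.Prime) (hm : 1 ≤ m)
    (χ : DirichletCharacter ℂ (p ^ m)) (hχ : χ.conductor = p) :
    ∑ a₁ ∈ (Finset.Icc 1 (p ^ m)).filter (fun a => Nat.gcd a (p ^ m) = 1),
      ∑ a₂ ∈ (Finset.Icc 1 (p ^ m)).filter
          (fun a₂ => Nat.gcd a₂ (p ^ m) = 1 ∧ Nat.gcd (a₁ + a₂) (p ^ m) = 1),
        ∑ b ∈ Fintype.piFinset (fun _ : Fin s => Finset.Icc 1 (p ^ m)),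
          (Nat.gcd (a₁ + a₂ - 1) (Nat.gcd (Finset.univ.gcd b) (p ^ m)) : ℂ)
            * χ (a₁ : ZMod (p ^ m))
      = -((p ^ (2 * m - 1)).totient : ℂ)
          * ((∑ d ∈ (p ^ (m - 1)).divisors, d ^ s : ℕ) : ℂ) := by
  have hp1 := hp.one_lt
  have hn0 : p ^ m ≠ 0 := pow_ne_zero _ hp.pos.ne'
  -- Step 1: evaluate the inner sum over b
  have step1 : ∀ a₁ a₂ : ℕ,
      (∑ b ∈ Fintype.piFinset (fun _ : Fin s => Finset.Icc 1 (p ^ m)),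
        (Nat.gcd (a₁ + a₂ - 1) (Nat.gcd (Finset.univ.gcd b) (p ^ m)) : ℂ)
          * χ (a₁ : ZMod (p ^ m)))
      = ∑ d ∈ (p ^ m).divisors,
          (if d ∣ a₁ + a₂ - 1 then ((d.totient * ((p ^ m) / d) ^ s : ℕ) : ℂ) else 0)
            * χ (a₁ : ZMod (p ^ m)) := by
    intro a₁ a₂
    rw [← Finset.sum_mul, ← Finset.sum_mul]
    congr 1
    rw [← Nat.cast_sum, sum_b (p ^ m) s (a₁ + a₂ - 1) hn0, Finset.sum_filter,
      Nat.cast_sum]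
    exact Finset.sum_congr rfl fun d _ => by split <;> simp
  -- rewrite and swap the summations
  have step2 : ∑ a₁ ∈ (Finset.Icc 1 (p ^ m)).filter (fun a => Nat.gcd a (p ^ m) = 1),
      ∑ a₂ ∈ (Finset.Icc 1 (p ^ m)).filter
          (fun a₂ => Nat.gcd a₂ (p ^ m) = 1 ∧ Nat.gcd (a₁ + a₂) (p ^ m) = 1),
        ∑ b ∈ Fintype.piFinset (fun _ : Fin s => Finset.Icc 1 (p ^ m)),
          (Nat.gcd (a₁ + a₂ - 1) (Nat.gcd (Finset.univ.gcd b) (p ^ m)) : ℂ)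
            * χ (a₁ : ZMod (p ^ m))
      = ∑ d ∈ (p ^ m).divisors, ((d.totient * ((p ^ m) / d) ^ s : ℕ) : ℂ) *
          ∑ a₁ ∈ (Finset.Icc 1 (p ^ m)).filter (fun a => Nat.gcd a (p ^ m) = 1),
            ((((Finset.Icc 1 (p ^ m)).filter
                (fun a₂ => Nat.gcd a₂ (p ^ m) = 1 ∧ Nat.gcd (a₁ + a₂) (p ^ m) = 1)).filter
              (fun a₂ => d ∣ a₁ + a₂ - 1)).card : ℂ) * χ (a₁ : ZMod (p ^ m)) := by
    calc ∑ a₁ ∈ (Finset.Icc 1 (p ^ m)).filter (fun a => Nat.gcd a (p ^ m) = 1),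
        ∑ a₂ ∈ (Finset.Icc 1 (p ^ m)).filter
            (fun a₂ => Nat.gcd a₂ (p ^ m) = 1 ∧ Nat.gcd (a₁ + a₂) (p ^ m) = 1),
          ∑ b ∈ Fintype.piFinset (fun _ : Fin s => Finset.Icc 1 (p ^ m)),
            (Nat.gcd (a₁ + a₂ - 1) (Nat.gcd (Finset.univ.gcd b) (p ^ m)) : ℂ)
              * χ (a₁ : ZMod (p ^ m))
        = ∑ a₁ ∈ (Finset.Icc 1 (p ^ m)).filter (fun a => Nat.gcd a (p ^ m) = 1),
            ∑ d ∈ (p ^ m).divisors,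
              ∑ a₂ ∈ (Finset.Icc 1 (p ^ m)).filter
                  (fun a₂ => Nat.gcd a₂ (p ^ m) = 1 ∧ Nat.gcd (a₁ + a₂) (p ^ m) = 1),
                (if d ∣ a₁ + a₂ - 1 then ((d.totient * ((p ^ m) / d) ^ s : ℕ) : ℂ) else 0)
                  * χ (a₁ : ZMod (p ^ m)) := by
          refine Finset.sum_congr rfl fun a₁ _ => ?_
          rw [Finset.sum_congr rfl fun a₂ _ => step1 a₁ a₂]
          exact Finset.sum_comm
      _ = ∑ d ∈ (p ^ m).divisors,
            ∑ a₁ ∈ (Finset.Icc 1 (p ^ m)).filter (fun a => Nat.gcd a (p ^ m) = 1),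
              ∑ a₂ ∈ (Finset.Icc 1 (p ^ m)).filter
                  (fun a₂ => Nat.gcd a₂ (p ^ m) = 1 ∧ Nat.gcd (a₁ + a₂) (p ^ m) = 1),
                (if d ∣ a₁ + a₂ - 1 then ((d.totient * ((p ^ m) / d) ^ s : ℕ) : ℂ) else 0)
                  * χ (a₁ : ZMod (p ^ m)) := Finset.sum_comm
      _ = _ := by
          refine Finset.sum_congr rfl fun d _ => ?_
          rw [Finset.mul_sum]
          refine Finset.sum_congr rfl fun a₁ _ => ?_
          rw [← Finset.sum_mul, ← Finset.sum_filter, Finset.sum_const, nsmul_eq_mul]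
          ring
  -- inner character sums
  have hinner : ∀ j, j < m →
      (∑ a₁ ∈ (Finset.Icc 1 (p ^ m)).filter (fun a => Nat.gcd a (p ^ m) = 1),
        ((((Finset.Icc 1 (p ^ m)).filter
            (fun a₂ => Nat.gcd a₂ (p ^ m) = 1 ∧ Nat.gcd (a₁ + a₂) (p ^ m) = 1)).filter
          (fun a₂ => p ^ (j + 1) ∣ a₁ + a₂ - 1)).card : ℂ) * χ (a₁ : ZMod (p ^ m)))
      = -((p ^ (m - (j + 1)) * p ^ (m - 1) : ℕ) : ℂ) := by
    intro j hj
    have key : ∀ a₁ ∈ (Finset.Icc 1 (p ^ m)).filter (fun a => Nat.gcd a (p ^ m) = 1),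
        ((((Finset.Icc 1 (p ^ m)).filter
            (fun a₂ => Nat.gcd a₂ (p ^ m) = 1 ∧ Nat.gcd (a₁ + a₂) (p ^ m) = 1)).filter
          (fun a₂ => p ^ (j + 1) ∣ a₁ + a₂ - 1)).card : ℂ) * χ (a₁ : ZMod (p ^ m))
        = ((p ^ (m - (j + 1)) : ℕ) : ℂ) * χ (a₁ : ZMod (p ^ m))
          - (if p ∣ a₁ - 1
              then ((p ^ (m - (j + 1)) : ℕ) : ℂ) * χ (a₁ : ZMod (p ^ m)) else 0) := by
      intro a₁ ha₁
      simp only [Finset.mem_filter, Finset.mem_Icc] at ha₁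
      by_cases hc : p ∣ a₁ - 1
      · rw [card_B_dvd_zero p m (j + 1) a₁ hp (by omega) hm ha₁.1.1 hc, if_pos hc]
        simp
      · rw [card_B_dvd p m (j + 1) a₁ hp (by omega) (by omega) ha₁.1.1 hc, if_neg hc]
        simp
    rw [Finset.sum_congr rfl key, Finset.sum_sub_distrib, ← Finset.mul_sum,
      sum_chi_eq_zero p m hp hm χ hχ, mul_zero, ← Finset.sum_filter,
      Finset.filter_filter, ← Finset.mul_sum, sum_chi_cong_one p m hp hm χ hχ]
    push_cast
    ring
  have h0 : (∑ a₁ ∈ (Finset.Icc 1 (p ^ m)).filter (fun a => Nat.gcd a (p ^ m) = 1),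
        ((((Finset.Icc 1 (p ^ m)).filter
            (fun a₂ => Nat.gcd a₂ (p ^ m) = 1 ∧ Nat.gcd (a₁ + a₂) (p ^ m) = 1)).filter
          (fun a₂ => 1 ∣ a₁ + a₂ - 1)).card : ℂ) * χ (a₁ : ZMod (p ^ m))) = 0 := by
    have key : ∀ a₁ ∈ (Finset.Icc 1 (p ^ m)).filter (fun a => Nat.gcd a (p ^ m) = 1),
        ((((Finset.Icc 1 (p ^ m)).filter
            (fun a₂ => Nat.gcd a₂ (p ^ m) = 1 ∧ Nat.gcd (a₁ + a₂) (p ^ m) = 1)).filter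
          (fun a₂ => 1 ∣ a₁ + a₂ - 1)).card : ℂ) * χ (a₁ : ZMod (p ^ m))
        = ((p ^ m - 2 * p ^ (m - 1) : ℕ) : ℂ) * χ (a₁ : ZMod (p ^ m)) := by
      intro a₁ ha₁
      simp only [Finset.mem_filter, Finset.mem_Icc] at ha₁
      rw [Finset.filter_true_of_mem (fun x _ => one_dvd _),
        card_B_one p m a₁ hp hm ((gcd_pow_one_iff p a₁ m hp hm).mp ha₁.2)]
    rw [Finset.sum_congr rfl key, ← Finset.mul_sum,
      sum_chi_eq_zero p m hp hm χ hχ, mul_zero]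
  have arith : ∀ j, j < m →
      (p ^ (j + 1)).totient * (p ^ m / p ^ (j + 1)) ^ s
          * (p ^ (m - (j + 1)) * p ^ (m - 1))
        = (p ^ (2 * m - 1)).totient * (p ^ (m - 1 - j)) ^ s := by
    intro j hj
    rw [Nat.pow_div (by omega) hp.pos, Nat.totient_prime_pow hp (Nat.succ_pos j),
      Nat.totient_prime_pow hp (show 0 < 2 * m - 1 by omega), Nat.succ_sub_one]
    have h1 : m - (j + 1) = m - 1 - j := by omega
    rw [h1]
    have h2 : p ^ j * (p ^ (m - 1 - j) * p ^ (m - 1)) = p ^ (2 * m - 1 - 1) := by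
      rw [← pow_add, ← pow_add]
      congr 1
      omega
    calc p ^ j * (p - 1) * (p ^ (m - 1 - j)) ^ s * (p ^ (m - 1 - j) * p ^ (m - 1))
        = (p ^ j * (p ^ (m - 1 - j) * p ^ (m - 1))) * ((p - 1) * (p ^ (m - 1 - j)) ^ s) := by
          ring
      _ = p ^ (2 * m - 1 - 1) * (p - 1) * (p ^ (m - 1 - j)) ^ s := by rw [h2]; ring
  have hsigma : ∑ j ∈ Finset.range m, (p ^ (m - 1 - j)) ^ s
      = ∑ d ∈ (p ^ (m - 1)).divisors, d ^ s := by
    rw [Nat.divisors_prime_pow hp (m - 1), show m - 1 + 1 = m from by omega,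
      Finset.sum_map]
    simp only [Function.Embedding.coeFn_mk]
    exact Finset.sum_range_reflect (fun j => (p ^ j) ^ s) m
  rw [step2, Nat.divisors_prime_pow hp m, Finset.sum_map, Finset.sum_range_succ']
  simp only [Function.Embedding.coeFn_mk]
  simp only [pow_zero]
  rw [h0, mul_zero, add_zero]
  have hterm : ∑ j ∈ Finset.range m,
      (((p ^ (j + 1)).totient * (p ^ m / p ^ (j + 1)) ^ s : ℕ) : ℂ) *
        ∑ a₁ ∈ (Finset.Icc 1 (p ^ m)).filter (fun a => Nat.gcd a (p ^ m) = 1),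
          ((((Finset.Icc 1 (p ^ m)).filter
              (fun a₂ => Nat.gcd a₂ (p ^ m) = 1 ∧ Nat.gcd (a₁ + a₂) (p ^ m) = 1)).filter
            (fun a₂ => p ^ (j + 1) ∣ a₁ + a₂ - 1)).card : ℂ) * χ (a₁ : ZMod (p ^ m))
      = ∑ j ∈ Finset.range m,
          -((((p ^ (2 * m - 1)).totient * (p ^ (m - 1 - j)) ^ s : ℕ) : ℂ)) := by
    refine Finset.sum_congr rfl fun j hj => ?_
    rw [hinner j (Finset.mem_range.mp hj), mul_neg, ← Nat.cast_mul,
      arith j (Finset.mem_range.mp hj)]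
  rw [hterm, Finset.sum_neg_distrib, ← Nat.cast_sum, ← Finset.mul_sum, hsigma]
  push_cast
  ring
end

section
/- Let p be a prime, m ≥ 1, and χ a Dirichlet character modulo p^m with conductor p^t where t ≥ 2. For every s ≥ 0, ∑ gcd(a₁+a₂-1, b₁,…,b_s, p^m)·χ(a₁), over a₁,a₂ units mod p^m with a₁+a₂ a unit and b₁,…,b_s ∈ ℤ/p^mℤ, equals 0. -/
open Finset

/-- Summing a function of the residue over `Icc 1 n` is summing over `ZMod n`. -/
private lemma sum_Icc_zmod {n : ℕ} [NeZero n] (F : ZMod n → ℂ) :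
    ∑ a ∈ Finset.Icc 1 n, F (a : ZMod n) = ∑ x : ZMod n, F x := by
  have hn : 0 < n := Nat.pos_of_ne_zero (NeZero.ne n)
  refine Finset.sum_nbij' (fun a => (a : ZMod n))
    (fun x => if x = 0 then n else x.val) ?_ ?_ ?_ ?_ ?_
  · intro a _; exact Finset.mem_univ _
  · intro x _
    by_cases hx : x = 0
    · simp only [hx, if_true, Finset.mem_Icc]
      omega
    · have h1 : x.val ≠ 0 := fun h => hx ((ZMod.val_eq_zero x).mp h)
      have h2 : x.val < n := ZMod.val_lt x
      simp [hx, Finset.mem_Icc]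
      omega
  · intro a ha
    rw [Finset.mem_Icc] at ha
    by_cases hz : (a : ZMod n) = 0
    · have hd : n ∣ a := (ZMod.natCast_eq_zero_iff a n).mp hz
      have : n ≤ a := Nat.le_of_dvd (by omega) hd
      simp [hz]; omega
    · have hlt : a < n := by
        rcases Nat.lt_or_ge a n with h | h
        · exact h
        · exfalso; apply hz
          have : a = n := by omega
          rw [this, ZMod.natCast_self]
      simp [hz, ZMod.val_natCast, Nat.mod_eq_of_lt hlt]
  · intro x _
    by_cases hx : x = 0
    · simp [hx]
    · simp [hx, ZMod.natCast_val, ZMod.cast_id]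
  · intro a _; rfl

private lemma gcd_val_cast {n B : ℕ} [NeZero n] (hB : B ∣ n) (x : ℕ) :
    Nat.gcd ((x : ZMod n)).val B = Nat.gcd x B := by
  rw [ZMod.val_natCast]
  conv_lhs => rw [Nat.gcd_comm, Nat.gcd_rec, Nat.mod_mod_of_dvd x hB]
  conv_rhs => rw [Nat.gcd_comm, Nat.gcd_rec]

/-- A multiply-by-a-unit permutation of a monoid. -/
private def unitMulEquiv {M : Type*} [Monoid M] (u : Mˣ) : M ≃ M where
  toFun a := ↑u * a
  invFun a := ↑u⁻¹ * a
  left_inv a := by simp [← mul_assoc]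
  right_inv a := by simp [← mul_assoc]

private lemma unitMulEquiv_apply {M : Type*} [Monoid M] (u : Mˣ) (a : M) :
    unitMulEquiv u a = ↑u * a := rfl

/-- In `ZMod (p^m)`, a residue is a unit iff its image mod `p` is nonzero. -/
private lemma isUnit_iff_pi {p m : ℕ} (hp : p.Prime) (hm : 1 ≤ m) [NeZero (p ^ m)]
    (x : ZMod (p ^ m)) :
    IsUnit x ↔ (ZMod.castHom (dvd_pow_self p (by omega : m ≠ 0)) (ZMod p)) x ≠ 0 := by
  haveI : NeZero p := ⟨hp.pos.ne'⟩
  have hx : ((x.val : ℕ) : ZMod (p ^ m)) = x := by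
    simp [ZMod.natCast_val, ZMod.cast_id]
  rw [← hx, ZMod.isUnit_iff_coprime, map_natCast, Ne,
    ZMod.natCast_eq_zero_iff, Nat.coprime_pow_right_iff (by omega : 0 < m),
    Nat.coprime_comm, hp.coprime_iff_not_dvd]

open scoped Classical in
/-- The key vanishing sum: `∑_{a, 1-a units} χ(a) = 0` when the conductor is `p^t`, `t ≥ 2`. -/
private lemma S_zero (p m t : ℕ) (hp : p.Prime) (hm : 1 ≤ m) (ht : 2 ≤ t) (htm : t ≤ m) [NeZero (p ^ m)]
    (χ : DirichletCharacter ℂ (p ^ m)) (hχ : χ.conductor = p ^ t) :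
    ∑ a : ZMod (p ^ m), (if IsUnit a ∧ IsUnit (1 - a) then χ a else 0) = 0 := by
  have hp2 := hp.two_le
  have hdvd : p ∣ p ^ m := dvd_pow_self p (by omega : m ≠ 0)
  set π := ZMod.castHom hdvd (ZMod p) with hπ
  -- χ is nontrivial
  have hχne : χ ≠ 1 := by
    intro h
    have h1 : χ.conductor = 1 := by
      rw [← DirichletCharacter.eq_one_iff_conductor_eq_one]
      exact h
    rw [hχ] at h1
    have : p ^ 2 ≤ p ^ t := Nat.pow_le_pow_right hp.pos ht
    nlinarith
  -- χ does not factor through p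
  have hnf : ¬ χ.FactorsThrough p := by
    intro h
    have hle : χ.conductor ≤ p := Nat.sInf_le h
    rw [hχ] at hle
    have h1 : p ^ 1 < p ^ t := Nat.pow_lt_pow_right hp.one_lt (by omega)
    simp at h1; omega
  -- get a unit w with π w = 1, χ w ≠ 1
  rw [DirichletCharacter.factorsThrough_iff_ker_unitsMap hdvd] at hnf
  obtain ⟨w, hw1, hw2⟩ := SetLike.not_le_iff_exists.mp hnf
  rw [MonoidHom.mem_ker] at hw1
  have hπw : π (↑w : ZMod (p ^ m)) = 1 := by
    have : ((ZMod.unitsMap hdvd w : (ZMod p)ˣ) : ZMod p) = ((1 : (ZMod p)ˣ) : ZMod p) := by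
      rw [hw1]
    simpa [ZMod.unitsMap_def, hπ, ZMod.castHom_apply] using this
  have hχw : χ (↑w : ZMod (p ^ m)) ≠ 1 := by
    intro h
    apply hw2
    rw [MonoidHom.mem_ker]
    ext
    rw [MulChar.coe_toUnitHom, h, Units.val_one]
  -- split the full unit sum
  have htot : ∑ a : ZMod (p ^ m), (if IsUnit a then χ a else 0) = 0 := by
    rw [show ∑ a : ZMod (p ^ m), (if IsUnit a then χ a else 0) = ∑ a : ZMod (p ^ m), χ a by
      refine Finset.sum_congr rfl fun a _ => ?_
      by_cases h : IsUnit a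
      · simp [h]
      · simp [h, χ.map_nonunit h]]
    exact MulChar.sum_eq_zero_of_ne_one hχne
  have hsplit : ∑ a : ZMod (p ^ m), (if IsUnit a then χ a else 0)
      = (∑ a : ZMod (p ^ m), (if IsUnit a ∧ IsUnit (1 - a) then χ a else 0))
        + ∑ a : ZMod (p ^ m), (if IsUnit a ∧ ¬ IsUnit (1 - a) then χ a else 0) := by
    rw [← Finset.sum_add_distrib]
    refine Finset.sum_congr rfl fun a _ => ?_
    by_cases h1 : IsUnit a <;> by_cases h2 : IsUnit (1 - a) <;> simp [h1, h2]
  -- the second sum K is over units ≡ 1 mod p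
  have hK : ∑ a : ZMod (p ^ m), (if IsUnit a ∧ ¬ IsUnit (1 - a) then χ a else 0)
      = ∑ a : ZMod (p ^ m), (if IsUnit a ∧ π a = 1 then χ a else 0) := by
    refine Finset.sum_congr rfl fun a _ => ?_
    refine if_congr (and_congr_right fun _ => ?_) rfl rfl
    rw [isUnit_iff_pi hp hm, not_not, map_sub, map_one, sub_eq_zero, eq_comm]
  have hKzero : ∑ a : ZMod (p ^ m), (if IsUnit a ∧ π a = 1 then χ a else 0) = 0 := by
    have hre : ∑ a : ZMod (p ^ m), (if IsUnit a ∧ π a = 1 then χ a else 0)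
        = ∑ a : ZMod (p ^ m), (if IsUnit a ∧ π a = 1 then χ ↑w * χ a else 0) := by
      rw [← Equiv.sum_comp (unitMulEquiv w)
        (fun a => if IsUnit a ∧ π a = 1 then χ a else 0)]
      refine Finset.sum_congr rfl fun a _ => ?_
      rw [unitMulEquiv_apply]
      have hc : (IsUnit ((↑w : ZMod (p ^ m)) * a) ∧ π ((↑w : ZMod (p ^ m)) * a) = 1)
          ↔ (IsUnit a ∧ π a = 1) := by
        rw [Units.isUnit_units_mul, map_mul, hπw, one_mul]
      rw [if_congr hc rfl rfl, map_mul]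
    have : (1 - χ ↑w) * ∑ a : ZMod (p ^ m), (if IsUnit a ∧ π a = 1 then χ a else 0) = 0 := by
      rw [sub_mul, one_mul, sub_eq_zero]
      conv_lhs => rw [hre]
      rw [Finset.mul_sum]
      refine Finset.sum_congr rfl fun a _ => ?_
      rw [mul_ite, mul_zero]
    rcases mul_eq_zero.mp this with h | h
    · exfalso; apply hχw; linear_combination -h
    · exact h
  rw [hsplit, hK, hKzero, add_zero] at htot
  exact htot

/-- Prime-power case of the main theorem, conductor `p^t` with `t ≥ 2`:
`∑ gcd(a₁+a₂-1, b₁, …, b_s, p^m) χ(a₁) = 0`. -/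
theorem menon_sury_prime_power_higher_conductor (p m t s : ℕ) (hp : p.Prime)
    (hm : 1 ≤ m) (ht : 2 ≤ t) (htm : t ≤ m)
    (χ : DirichletCharacter ℂ (p ^ m)) (hχ : χ.conductor = p ^ t) :
    ∑ a₁ ∈ (Finset.Icc 1 (p ^ m)).filter (fun a => Nat.gcd a (p ^ m) = 1),
      ∑ a₂ ∈ (Finset.Icc 1 (p ^ m)).filter
          (fun a₂ => Nat.gcd a₂ (p ^ m) = 1 ∧ Nat.gcd (a₁ + a₂) (p ^ m) = 1),
        ∑ b ∈ Fintype.piFinset (fun _ : Fin s => Finset.Icc 1 (p ^ m)),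
          (Nat.gcd (a₁ + a₂ - 1) (Nat.gcd (Finset.univ.gcd b) (p ^ m)) : ℂ)
            * χ (a₁ : ZMod (p ^ m))
      = 0 := by
  classical
  have hp2 := hp.two_le
  haveI : NeZero (p ^ m) := ⟨pow_ne_zero m hp.pos.ne'⟩
  have hS : ∑ a : ZMod (p ^ m), (if IsUnit a ∧ IsUnit (1 - a) then χ a else 0) = 0 :=
    S_zero p m t hp hm ht htm χ hχ
  set F : ZMod (p ^ m) → ℂ := fun c =>
    ∑ b ∈ Fintype.piFinset (fun _ : Fin s => Finset.Icc 1 (p ^ m)),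
      (Nat.gcd (c - 1).val (Nat.gcd (Finset.univ.gcd b) (p ^ m)) : ℂ) with hF
  set G : ZMod (p ^ m) → ℂ := fun x₁ =>
    if IsUnit x₁ then
      ∑ x₂ : ZMod (p ^ m),
        (if IsUnit x₂ ∧ IsUnit (x₁ + x₂) then F (x₁ + x₂) * χ x₁ else 0)
    else 0 with hG
  have step1 : ∑ a₁ ∈ (Finset.Icc 1 (p ^ m)).filter (fun a => Nat.gcd a (p ^ m) = 1),
      ∑ a₂ ∈ (Finset.Icc 1 (p ^ m)).filter
          (fun a₂ => Nat.gcd a₂ (p ^ m) = 1 ∧ Nat.gcd (a₁ + a₂) (p ^ m) = 1),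
        ∑ b ∈ Fintype.piFinset (fun _ : Fin s => Finset.Icc 1 (p ^ m)),
          (Nat.gcd (a₁ + a₂ - 1) (Nat.gcd (Finset.univ.gcd b) (p ^ m)) : ℂ)
            * χ (a₁ : ZMod (p ^ m))
      = ∑ x₁ : ZMod (p ^ m), G x₁ := by
    rw [Finset.sum_filter, ← sum_Icc_zmod G]
    refine Finset.sum_congr rfl fun a₁ ha₁ => ?_
    rw [Finset.mem_Icc] at ha₁
    by_cases h1 : IsUnit ((a₁ : ZMod (p ^ m)))
    · have hg1 : Nat.gcd a₁ (p ^ m) = 1 := (ZMod.isUnit_iff_coprime a₁ (p ^ m)).mp h1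
      rw [if_pos hg1, hG]
      simp only [if_pos h1]
      rw [Finset.sum_filter, ← sum_Icc_zmod
        (fun x₂ => if IsUnit x₂ ∧ IsUnit ((a₁ : ZMod (p ^ m)) + x₂)
          then F ((a₁ : ZMod (p ^ m)) + x₂) * χ (a₁ : ZMod (p ^ m)) else 0)]
    
      refine Finset.sum_congr rfl fun a₂ ha₂ => ?_
      rw [Finset.mem_Icc] at ha₂
      have hcast : ((a₁ + a₂ : ℕ) : ZMod (p ^ m))
          = (a₁ : ZMod (p ^ m)) + (a₂ : ZMod (p ^ m)) := by push_cast; ring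
      have hc : (Nat.gcd a₂ (p ^ m) = 1 ∧ Nat.gcd (a₁ + a₂) (p ^ m) = 1)
          ↔ (IsUnit ((a₂ : ZMod (p ^ m)))
              ∧ IsUnit ((a₁ : ZMod (p ^ m)) + (a₂ : ZMod (p ^ m)))) := by
        rw [← hcast]
        constructor
        · rintro ⟨u1, u2⟩
          exact ⟨(ZMod.isUnit_iff_coprime a₂ (p ^ m)).mpr u1,
            (ZMod.isUnit_iff_coprime (a₁ + a₂) (p ^ m)).mpr u2⟩
        · rintro ⟨u1, u2⟩
          exact ⟨(ZMod.isUnit_iff_coprime a₂ (p ^ m)).mp u1,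
            (ZMod.isUnit_iff_coprime (a₁ + a₂) (p ^ m)).mp u2⟩
      rw [if_congr hc rfl rfl]
      by_cases h2 : IsUnit ((a₂ : ZMod (p ^ m)))
          ∧ IsUnit ((a₁ : ZMod (p ^ m)) + (a₂ : ZMod (p ^ m)))
      · rw [if_pos h2, if_pos h2, hF]
        rw [Finset.sum_mul]
        refine Finset.sum_congr rfl fun b _ => ?_
        congr 2
        have hB : Nat.gcd (Finset.univ.gcd b) (p ^ m) ∣ p ^ m := Nat.gcd_dvd_right _ _
        have hsub : ((a₁ : ZMod (p ^ m)) + (a₂ : ZMod (p ^ m))) - 1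
            = ((a₁ + a₂ - 1 : ℕ) : ZMod (p ^ m)) := by
          rw [← hcast, Nat.cast_sub (by omega : 1 ≤ a₁ + a₂), Nat.cast_one]
        rw [hsub, gcd_val_cast hB]
      · rw [if_neg h2, if_neg h2]
    · have hg1 : ¬ Nat.gcd a₁ (p ^ m) = 1 := fun h =>
        h1 ((ZMod.isUnit_iff_coprime a₁ (p ^ m)).mpr h)
      rw [if_neg hg1, hG]
      simp only [if_neg h1]
  rw [step1]
  have step2 : ∀ x₁ : ZMod (p ^ m), G x₁
      = ∑ c : ZMod (p ^ m),
          (if IsUnit x₁ ∧ IsUnit c ∧ IsUnit (c - x₁) then F c * χ x₁ else 0) := by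
    intro x₁
    by_cases h1 : IsUnit x₁
    · rw [hG]
      simp only [if_pos h1]
      refine Fintype.sum_equiv (Equiv.addLeft x₁) _ _ fun x₂ => ?_
      simp only [Equiv.coe_addLeft, add_sub_cancel_left]
      refine if_congr ?_ rfl rfl
      tauto
    · rw [hG]
      simp only [if_neg h1]
      rw [eq_comm]
      refine Finset.sum_eq_zero fun c _ => ?_
      rw [if_neg (by tauto)]
  rw [Finset.sum_congr rfl fun x₁ _ => step2 x₁, Finset.sum_comm]
  refine Finset.sum_eq_zero fun c _ => ?_
  by_cases hc : IsUnit c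
  · obtain ⟨u, hu⟩ := hc
    have h4 : ∑ x₁ : ZMod (p ^ m),
        (if IsUnit x₁ ∧ IsUnit c ∧ IsUnit (c - x₁) then F c * χ x₁ else 0)
        = ∑ a : ZMod (p ^ m),
            (if IsUnit a ∧ IsUnit (1 - a) then F c * χ c * χ a else 0) := by
      rw [← Equiv.sum_comp (unitMulEquiv u)
        (fun x₁ => if IsUnit x₁ ∧ IsUnit c ∧ IsUnit (c - x₁) then F c * χ x₁ else 0)]
      refine Finset.sum_congr rfl fun a _ => ?_
      rw [unitMulEquiv_apply, hu]
      have hcc : c - c * a = c * (1 - a) := by ring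
      have hcnd : (IsUnit (c * a) ∧ IsUnit c ∧ IsUnit (c - c * a))
          ↔ (IsUnit a ∧ IsUnit (1 - a)) := by
        rw [hcc, ← hu, Units.isUnit_units_mul, Units.isUnit_units_mul]
        have hcu : IsUnit (↑u : ZMod (p ^ m)) := u.isUnit
        rw [hu] at hcu
        tauto
      rw [if_congr hcnd rfl rfl]
      by_cases h : IsUnit a ∧ IsUnit (1 - a)
      · rw [if_pos h, if_pos h, map_mul, mul_assoc]
      · rw [if_neg h, if_neg h]
    have h5 : ∑ a : ZMod (p ^ m),
        (if IsUnit a ∧ IsUnit (1 - a) then F c * χ c * χ a else 0)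
        = F c * χ c * ∑ a : ZMod (p ^ m), (if IsUnit a ∧ IsUnit (1 - a) then χ a else 0) := by
      rw [Finset.mul_sum]
      refine Finset.sum_congr rfl fun a _ => ?_
      rw [mul_ite, mul_zero]
    rw [h4, h5, hS, mul_zero]
  · refine Finset.sum_eq_zero fun x₁ _ => ?_
    rw [if_neg (by tauto)]
end

section
/- Define S_χ(n, s) = ∑ gcd(a₁+a₂-1, b₁,…,b_s, n)·χ(a₁) over 1 ≤ a₁,a₂,b₁,…,b_s ≤ n with gcd(a₁a₂,n) = 1 and gcd(a₁+a₂,n) = 1, for χ a Dirichlet character mod n. If n = n₁n₂ with gcd(n₁,n₂) = 1 and χ = χ₁χ₂ with χᵢ a character mod nᵢ, then S_χ(n,s) = S_{χ₁}(n₁,s)·S_{χ₂}(n₂,s). -/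
open Finset

/-- The character-twisted Menon–Sury sum
`S_χ(n, s) = ∑ gcd(a₁+a₂-1, b₁, …, b_s, n) χ(a₁)`, summed over
`1 ≤ a₁, a₂, b₁, …, b_s ≤ n` with `gcd(a₁a₂, n) = 1` and `gcd(a₁+a₂, n) = 1`. -/
noncomputable def menonSurySum {n : ℕ} (χ : DirichletCharacter ℂ n) (s : ℕ) : ℂ :=
  ∑ a₁ ∈ Finset.Icc 1 n, ∑ a₂ ∈ Finset.Icc 1 n,
    ∑ b ∈ Fintype.piFinset (fun _ : Fin s => Finset.Icc 1 n),
      if Nat.gcd (a₁ * a₂) n = 1 ∧ Nat.gcd (a₁ + a₂) n = 1 then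
        (Nat.gcd (a₁ + a₂ - 1) (Nat.gcd (Finset.univ.gcd b) n) : ℂ) * χ (a₁ : ZMod n)
      else 0

namespace MSAux

/-- canonical representative of `a` in `Icc 1 n` -/
def e (n a : ℕ) : ℕ := (a - 1) % n + 1

lemma e_modEq (n : ℕ) {a : ℕ} (ha : 1 ≤ a) : e n a ≡ a [MOD n] := by
  have h1 : (a - 1) % n ≡ a - 1 [MOD n] := Nat.mod_modEq _ _
  have h2 := h1.add_right 1
  simpa [e, Nat.sub_add_cancel ha] using h2

lemma e_mem {n : ℕ} (hn : 0 < n) (a : ℕ) : e n a ∈ Icc 1 n := by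
  simp only [e, mem_Icc]
  exact ⟨Nat.le_add_left _ _, Nat.succ_le_of_lt (Nat.mod_lt _ hn)⟩

lemma e_eq_self {n a : ℕ} (h : a ∈ Icc 1 n) : e n a = a := by
  obtain ⟨h1, h2⟩ := mem_Icc.mp h
  have hlt : a - 1 < n := by omega
  simp only [e, Nat.mod_eq_of_lt hlt]
  omega

lemma e_congr {n a b : ℕ} (ha : 1 ≤ a) (hb : 1 ≤ b) (h : a ≡ b [MOD n]) :
    e n a = e n b := by
  have h' : a - 1 ≡ b - 1 [MOD n] := by
    apply Nat.ModEq.add_right_cancel' 1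
    rwa [Nat.sub_add_cancel ha, Nat.sub_add_cancel hb]
  simp only [e]
  rw [(h' : (a - 1) % n = (b - 1) % n)]

lemma icc_inj {n a b : ℕ} (ha : a ∈ Icc 1 n) (hb : b ∈ Icc 1 n)
    (h : a ≡ b [MOD n]) : a = b := by
  rw [← e_eq_self ha, ← e_eq_self hb]
  exact e_congr (mem_Icc.mp ha).1 (mem_Icc.mp hb).1 h

lemma gcd_congr {n d a b : ℕ} (hd : d ∣ n) (h : a ≡ b [MOD n]) :
    Nat.gcd a d = Nat.gcd b d := by
  have h' : a ≡ b [MOD d] := h.of_dvd hd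
  rw [Nat.gcd_comm a d, Nat.gcd_comm b d, Nat.gcd_rec d a, Nat.gcd_rec d b,
    (h' : a % d = b % d)]

lemma sub_one_modEq {n a b : ℕ} (ha : 1 ≤ a) (hb : 1 ≤ b) (h : a ≡ b [MOD n]) :
    a - 1 ≡ b - 1 [MOD n] := by
  apply Nat.ModEq.add_right_cancel' 1
  rwa [Nat.sub_add_cancel ha, Nat.sub_add_cancel hb]

lemma gcd_fn_congr {s n : ℕ} (b b' : Fin s → ℕ) (h : ∀ i, b i ≡ b' i [MOD n]) :
    Nat.gcd (univ.gcd b) n = Nat.gcd (univ.gcd b') n := by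
  have key : ∀ (c c' : Fin s → ℕ), (∀ i, c i ≡ c' i [MOD n]) →
      Nat.gcd (univ.gcd c) n ∣ Nat.gcd (univ.gcd c') n := by
    intro c c' hcc
    set d := Nat.gcd (univ.gcd c) n with hd
    have hdn : d ∣ n := Nat.gcd_dvd_right _ _
    refine Nat.dvd_gcd (Finset.dvd_gcd fun i _ => ?_) hdn
    have hdc : d ∣ c i := (Nat.gcd_dvd_left _ _).trans (Finset.gcd_dvd (mem_univ i))
    have hmod : c i ≡ c' i [MOD d] := (hcc i).of_dvd hdn
    have h0 : c i ≡ 0 [MOD d] := (Nat.modEq_zero_iff_dvd).mpr hdc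
    exact (Nat.modEq_zero_iff_dvd).mp (hmod.symm.trans h0)
  exact Nat.dvd_antisymm (key b b' h) (key b' b fun i => (h i).symm)

lemma gcd_split {m n c g : ℕ} (h : Nat.Coprime m n) :
    Nat.gcd c (Nat.gcd g (m * n)) = Nat.gcd c (Nat.gcd g m) * Nat.gcd c (Nat.gcd g n) := by
  have h2 : Nat.Coprime (Nat.gcd g m) (Nat.gcd g n) :=
    Nat.Coprime.coprime_dvd_left (Nat.gcd_dvd_right g m)
      (h.coprime_dvd_right (Nat.gcd_dvd_right g n))
  rw [Nat.Coprime.gcd_mul g h, Nat.Coprime.gcd_mul c h2]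

end MSAux

open MSAux

/-- Multiplicativity of the character-twisted Menon–Sury sum: if `n = n₁ n₂`
with `gcd(n₁, n₂) = 1` and `χ = χ₁ χ₂` with `χᵢ` a character mod `nᵢ`, then
`S_χ(n, s) = S_{χ₁}(n₁, s) · S_{χ₂}(n₂, s)`. -/
theorem menonSurySum_multiplicative (n₁ n₂ : ℕ) (h₁ : 0 < n₁) (h₂ : 0 < n₂)
    (hcop : Nat.Coprime n₁ n₂) (s : ℕ)
    (χ : DirichletCharacter ℂ (n₁ * n₂))
    (χ₁ : DirichletCharacter ℂ n₁) (χ₂ : DirichletCharacter ℂ n₂)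
    (hχ : ∀ a : ZMod (n₁ * n₂),
      χ a = χ₁ (ZMod.castHom (dvd_mul_right n₁ n₂) (ZMod n₁) a)
              * χ₂ (ZMod.castHom (dvd_mul_left n₂ n₁) (ZMod n₂) a)) :
    menonSurySum χ s = menonSurySum χ₁ s * menonSurySum χ₂ s := by
  classical
  have hn0 : 0 < n₁ * n₂ := Nat.mul_pos h₁ h₂
  -- rewrite each sum as a sum over a product finset
  have key : ∀ (m : ℕ) (ψ : DirichletCharacter ℂ m),
      menonSurySum ψ s =
        ∑ x ∈ Icc 1 m ×ˢ (Icc 1 m ×ˢ Fintype.piFinset (fun _ : Fin s => Icc 1 m)),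
          (if Nat.gcd (x.1 * x.2.1) m = 1 ∧ Nat.gcd (x.1 + x.2.1) m = 1 then
            (Nat.gcd (x.1 + x.2.1 - 1) (Nat.gcd (Finset.univ.gcd x.2.2) m) : ℂ) *
              ψ (x.1 : ZMod m)
          else 0) := by
    intro m ψ
    rw [menonSurySum]
    simp only [Finset.sum_product]
  rw [key _ χ, key _ χ₁, key _ χ₂, Finset.sum_mul_sum, ← Finset.sum_product']
  refine Finset.sum_bij
    (fun x _ => ((e n₁ x.1, e n₁ x.2.1, fun i => e n₁ (x.2.2 i)),
                 (e n₂ x.1, e n₂ x.2.1, fun i => e n₂ (x.2.2 i)))) ?_ ?_ ?_ ?_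
  · -- maps to
    rintro ⟨a₁, a₂, b⟩ hx
    simp only [Finset.mem_product, Fintype.mem_piFinset]
    exact ⟨⟨e_mem h₁ _, e_mem h₁ _, fun i => e_mem h₁ _⟩,
           ⟨e_mem h₂ _, e_mem h₂ _, fun i => e_mem h₂ _⟩⟩
  · -- injective
    rintro ⟨a₁, a₂, b⟩ hx ⟨c₁, c₂, d⟩ hy h
    simp only [Finset.mem_product, Fintype.mem_piFinset, mem_Icc] at hx hy
    obtain ⟨⟨ha₁, _⟩, ⟨ha₂, _⟩, hb⟩ := hx
    obtain ⟨⟨hc₁, _⟩, ⟨hc₂, _⟩, hd⟩ := hy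
    simp only [Prod.mk.injEq] at h
    obtain ⟨⟨h11, h12, h13⟩, h21, h22, h23⟩ := h
    have memN : ∀ {a : ℕ}, 1 ≤ a → a ≤ n₁ * n₂ → a ∈ Icc 1 (n₁ * n₂) := by
      intro a h1 h2; exact mem_Icc.mpr ⟨h1, h2⟩
    have comb : ∀ {a b : ℕ}, 1 ≤ a → 1 ≤ b →
        e n₁ a = e n₁ b → e n₂ a = e n₂ b → a ≡ b [MOD n₁ * n₂] := by
      intro a b ha hb hab1 hab2
      refine (Nat.modEq_and_modEq_iff_modEq_mul hcop).mp ⟨?_, ?_⟩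
      · exact (e_modEq n₁ ha).symm.trans (hab1 ▸ e_modEq n₁ hb)
      · exact (e_modEq n₂ ha).symm.trans (hab2 ▸ e_modEq n₂ hb)
    simp only [Prod.mk.injEq]
    refine ⟨?_, ?_, funext fun i => ?_⟩
    · exact icc_inj (mem_Icc.mpr ⟨ha₁, by omega⟩) (mem_Icc.mpr ⟨hc₁, by omega⟩)
        (comb ha₁ hc₁ h11 h21)
    · exact icc_inj (mem_Icc.mpr ⟨ha₂, by omega⟩) (mem_Icc.mpr ⟨hc₂, by omega⟩)
        (comb ha₂ hc₂ h12 h22)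
    · exact icc_inj (mem_Icc.mpr (hb i)) (mem_Icc.mpr (hd i))
        (comb (hb i).1 (hd i).1 (congrFun h13 i) (congrFun h23 i))
  · -- surjective
    have crt : ∀ u v : ℕ, u ∈ Icc 1 n₁ → v ∈ Icc 1 n₂ →
        ∃ a ∈ Icc 1 (n₁ * n₂), e n₁ a = u ∧ e n₂ a = v := by
      intro u v hu hv
      obtain ⟨k, hk₁, hk₂⟩ := Nat.chineseRemainder hcop u v
      have hk1 : 1 ≤ k + n₁ * n₂ := by omega
      have hbase : e (n₁ * n₂) (k + n₁ * n₂) ≡ k + n₁ * n₂ [MOD n₁ * n₂] :=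
        e_modEq _ hk1
      refine ⟨e (n₁ * n₂) (k + n₁ * n₂), e_mem hn0 _, ?_, ?_⟩
      · have h2 := hbase.of_dvd (dvd_mul_right n₁ n₂)
        have h3 : k + n₁ * n₂ ≡ k [MOD n₁] := by
          simpa using (Nat.ModEq.refl k).add
            ((Nat.modEq_zero_iff_dvd).mpr (dvd_mul_right n₁ n₂))
        have hmod : e (n₁ * n₂) (k + n₁ * n₂) ≡ u [MOD n₁] :=
          h2.trans (h3.trans hk₁)
        rw [e_congr (mem_Icc.mp (e_mem hn0 _)).1 (mem_Icc.mp hu).1 hmod, e_eq_self hu]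
      · have h2 := hbase.of_dvd (dvd_mul_left n₂ n₁)
        have h3 : k + n₁ * n₂ ≡ k [MOD n₂] := by
          simpa using (Nat.ModEq.refl k).add
            ((Nat.modEq_zero_iff_dvd).mpr (dvd_mul_left n₂ n₁))
        have hmod : e (n₁ * n₂) (k + n₁ * n₂) ≡ v [MOD n₂] :=
          h2.trans (h3.trans hk₂)
        rw [e_congr (mem_Icc.mp (e_mem hn0 _)).1 (mem_Icc.mp hv).1 hmod, e_eq_self hv]
    rintro ⟨⟨c₁, c₂, d⟩, c₁', c₂', d'⟩ hp
    simp only [Finset.mem_product, Fintype.mem_piFinset] at hp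
    obtain ⟨⟨hc₁, hc₂, hd⟩, hc₁', hc₂', hd'⟩ := hp
    obtain ⟨A₁, hA₁mem, hA₁₁, hA₁₂⟩ := crt c₁ c₁' hc₁ hc₁'
    obtain ⟨A₂, hA₂mem, hA₂₁, hA₂₂⟩ := crt c₂ c₂' hc₂ hc₂'
    choose B hBmem hB₁ hB₂ using fun i => crt (d i) (d' i) (hd i) (hd' i)
    refine ⟨(A₁, A₂, B), ?_, ?_⟩
    · simp only [Finset.mem_product, Fintype.mem_piFinset]
      exact ⟨hA₁mem, hA₂mem, hBmem⟩
    · simp only [Prod.mk.injEq]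
      exact ⟨⟨hA₁₁, hA₂₁, funext hB₁⟩, hA₁₂, hA₂₂, funext hB₂⟩
  · -- values
    rintro ⟨a₁, a₂, b⟩ hx
    simp only [Finset.mem_product, Fintype.mem_piFinset, mem_Icc] at hx
    obtain ⟨⟨ha₁, _⟩, ⟨ha₂, _⟩, hb⟩ := hx
    dsimp only
    have hm1 : e n₁ a₁ * e n₁ a₂ ≡ a₁ * a₂ [MOD n₁] :=
      (e_modEq n₁ ha₁).mul (e_modEq n₁ ha₂)
    have hm2 : e n₂ a₁ * e n₂ a₂ ≡ a₁ * a₂ [MOD n₂] :=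
      (e_modEq n₂ ha₁).mul (e_modEq n₂ ha₂)
    have hs1 : e n₁ a₁ + e n₁ a₂ ≡ a₁ + a₂ [MOD n₁] :=
      (e_modEq n₁ ha₁).add (e_modEq n₁ ha₂)
    have hs2 : e n₂ a₁ + e n₂ a₂ ≡ a₁ + a₂ [MOD n₂] :=
      (e_modEq n₂ ha₁).add (e_modEq n₂ ha₂)
    have hg1 : Nat.gcd (univ.gcd fun i => e n₁ (b i)) n₁ = Nat.gcd (univ.gcd b) n₁ :=
      gcd_fn_congr _ _ (fun i => e_modEq n₁ (hb i).1)
    have hg2 : Nat.gcd (univ.gcd fun i => e n₂ (b i)) n₂ = Nat.gcd (univ.gcd b) n₂ :=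
      gcd_fn_congr _ _ (fun i => e_modEq n₂ (hb i).1)
    have hP : Nat.gcd (a₁ * a₂) (n₁ * n₂) = 1 ↔
        (Nat.gcd (e n₁ a₁ * e n₁ a₂) n₁ = 1 ∧ Nat.gcd (e n₂ a₁ * e n₂ a₂) n₂ = 1) := by
      rw [gcd_congr dvd_rfl hm1, gcd_congr dvd_rfl hm2]
      exact Nat.coprime_mul_iff_right
    have hQ : Nat.gcd (a₁ + a₂) (n₁ * n₂) = 1 ↔
        (Nat.gcd (e n₁ a₁ + e n₁ a₂) n₁ = 1 ∧ Nat.gcd (e n₂ a₁ + e n₂ a₂) n₂ = 1) := by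
      rw [gcd_congr dvd_rfl hs1, gcd_congr dvd_rfl hs2]
      exact Nat.coprime_mul_iff_right
    by_cases hc : Nat.gcd (a₁ * a₂) (n₁ * n₂) = 1 ∧ Nat.gcd (a₁ + a₂) (n₁ * n₂) = 1
    · rw [if_pos hc, if_pos ⟨(hP.mp hc.1).1, (hQ.mp hc.2).1⟩,
        if_pos ⟨(hP.mp hc.1).2, (hQ.mp hc.2).2⟩]
      have hχeq : χ ((a₁ : ℕ) : ZMod (n₁ * n₂)) =
          χ₁ ((e n₁ a₁ : ℕ) : ZMod n₁) * χ₂ ((e n₂ a₁ : ℕ) : ZMod n₂) := by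
        rw [hχ, map_natCast (ZMod.castHom (dvd_mul_right n₁ n₂) (ZMod n₁)) a₁,
          map_natCast (ZMod.castHom (dvd_mul_left n₂ n₁) (ZMod n₂)) a₁,
          (ZMod.natCast_eq_natCast_iff _ _ _).mpr (e_modEq n₁ ha₁),
          (ZMod.natCast_eq_natCast_iff _ _ _).mpr (e_modEq n₂ ha₁)]
      have h1e : 1 ≤ e n₁ a₁ + e n₁ a₂ := le_trans (Nat.le_add_left 1 _) le_rfl
      have h2e : 1 ≤ e n₂ a₁ + e n₂ a₂ := le_trans (Nat.le_add_left 1 _) le_rfl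
      have hsum : 1 ≤ a₁ + a₂ := by omega
      have hgcdval : (Nat.gcd (a₁ + a₂ - 1) (Nat.gcd (univ.gcd b) (n₁ * n₂))) =
          Nat.gcd (e n₁ a₁ + e n₁ a₂ - 1) (Nat.gcd (univ.gcd fun i => e n₁ (b i)) n₁) *
          Nat.gcd (e n₂ a₁ + e n₂ a₂ - 1) (Nat.gcd (univ.gcd fun i => e n₂ (b i)) n₂) := by
        rw [hg1, hg2, gcd_split hcop,
          gcd_congr (Nat.gcd_dvd_right (univ.gcd b) n₁) (sub_one_modEq h1e hsum hs1),
          gcd_congr (Nat.gcd_dvd_right (univ.gcd b) n₂) (sub_one_modEq h2e hsum hs2)]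
      rw [hχeq, hgcdval, Nat.cast_mul]
      ring
    · rw [if_neg hc]
      split_ifs with hA hB
      · exact absurd ⟨hP.mpr ⟨hA.1, hB.1⟩, hQ.mpr ⟨hA.2, hB.2⟩⟩ hc
      all_goals simp
end

section
/- For every positive integer n and every integer s ≥ 0, ∑ gcd(a₁+a₂-1, b₁,…,b_s, n) over 1 ≤ a₁,a₂,b₁,…,b_s ≤ n with gcd(a₁a₂,n)=1 and gcd(a₁+a₂,n)=1 equals φ₂(n)·σ_s(n). -/
open Finset
open scoped Classical

namespace MenonAux

/-- transfer a sum over `Icc 1 n` to a sum over `ZMod n` -/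
lemma sum_Icc_eq_sum_zmod {M : Type*} [AddCommMonoid M] (n : ℕ) [NeZero n] (F : ZMod n → M) :
    ∑ a ∈ Finset.Icc 1 n, F (a : ZMod n) = ∑ x : ZMod n, F x := by
  have hn : 0 < n := Nat.pos_of_ne_zero (NeZero.ne n)
  refine Finset.sum_nbij' (i := fun a : ℕ => (a : ZMod n))
    (j := fun x : ZMod n => if x = 0 then n else x.val) ?_ ?_ ?_ ?_ ?_
  · intro a _; exact Finset.mem_univ _
  · intro x _
    show (if x = 0 then n else x.val) ∈ Finset.Icc 1 n
    split_ifs with hx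
    · rw [Finset.mem_Icc]; omega
    · rw [Finset.mem_Icc]
      have h1 : x.val ≠ 0 := fun h => hx ((ZMod.val_eq_zero x).mp h)
      have h2 : x.val < n := ZMod.val_lt x
      omega
  · intro a ha
    rw [Finset.mem_Icc] at ha
    show (if (a : ZMod n) = 0 then n else (a : ZMod n).val) = a
    split_ifs with h
    · have hd : n ∣ a := (ZMod.natCast_eq_zero_iff a n).mp h
      have : n ≤ a := Nat.le_of_dvd (by omega) hd
      omega
    · have han : a ≠ n := by intro hEq; subst hEq; exact h (ZMod.natCast_self a)
      rw [ZMod.val_natCast, Nat.mod_eq_of_lt (by omega)]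
  · intro x _
    show ((if x = 0 then n else x.val : ℕ) : ZMod n) = x
    split_ifs with hx
    · simp [hx]
    · exact ZMod.natCast_rightInverse x
  · intro a _; rfl

lemma card_filter_isUnit (d : ℕ) [NeZero d] :
    (Finset.univ.filter fun x : ZMod d => IsUnit x).card = Nat.totient d := by
  rw [← ZMod.card_units_eq_totient d]
  rw [← Finset.card_univ,
    ← Finset.card_image_of_injective Finset.univ
      (Units.val_injective : Function.Injective (Units.val : (ZMod d)ˣ → ZMod d))]
  congr 1
  ext x
  simp [IsUnit]
  exact Finset.mem_filter.trans (and_iff_right (Finset.mem_univ x))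

noncomputable def Spairs (n : ℕ) [NeZero n] : Finset (ZMod n × ZMod n) :=
  Finset.univ.filter fun p => IsUnit p.1 ∧ IsUnit p.2 ∧ IsUnit (p.1 + p.2)

lemma card_fiber_eq (n d : ℕ) [NeZero n] (hd : d ∣ n) (t : ZMod d) (ht : IsUnit t) :
    ((Spairs n).filter fun p => ZMod.castHom hd (ZMod d) (p.1 + p.2) = t).card
      = ((Spairs n).filter fun p => ZMod.castHom hd (ZMod d) (p.1 + p.2) = 1).card := by
  obtain ⟨v, hv⟩ := ZMod.unitsMap_surjective hd ht.unit
  set f := ZMod.castHom hd (ZMod d) with hf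
  set u : ZMod n := (v : ZMod n) with hu
  set u' : ZMod n := ((v⁻¹ : (ZMod n)ˣ) : ZMod n) with hu'
  have huu' : u * u' = 1 := by rw [hu, hu']; exact_mod_cast v.mul_inv
  have hu'u : u' * u = 1 := by rw [hu, hu']; exact_mod_cast v.inv_mul
  have hfu : f u = t := by
    have := congrArg (fun w : (ZMod d)ˣ => (w : ZMod d)) hv
    have h2 : (ZMod.cast (v : ZMod n) : ZMod d) = t := by
      simpa [ZMod.unitsMap_def, IsUnit.unit_spec] using this
    exact h2
  have hfu' : f u' * t = 1 := by
    rw [← hfu, ← map_mul, hu'u, map_one]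
  have hmem : ∀ p : ZMod n × ZMod n, p ∈ Spairs n → ∀ w : ZMod n, IsUnit w →
      (w * p.1, w * p.2) ∈ Spairs n := by
    intro p hp w hw
    rw [Spairs, Finset.mem_filter] at hp ⊢
    obtain ⟨-, h1, h2, h3⟩ := hp
    exact ⟨Finset.mem_univ _, hw.mul h1, hw.mul h2, by rw [← mul_add]; exact hw.mul h3⟩
  refine Finset.card_nbij' (i := fun p => (u' * p.1, u' * p.2))
    (j := fun p => (u * p.1, u * p.2)) ?_ ?_ ?_ ?_
  · intro p hp
    rw [Finset.mem_coe, Finset.mem_filter] at hp ⊢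
    refine ⟨hmem p hp.1 u' (by exact (v⁻¹).isUnit), ?_⟩
    show f (u' * p.1 + u' * p.2) = 1
    rw [← mul_add, map_mul, hp.2]
    exact hfu'
  · intro p hp
    rw [Finset.mem_coe, Finset.mem_filter] at hp ⊢
    refine ⟨hmem p hp.1 u v.isUnit, ?_⟩
    show f (u * p.1 + u * p.2) = t
    rw [← mul_add, map_mul, hp.2, mul_one, hfu]
  · intro p _
    show (u * (u' * p.1), u * (u' * p.2)) = p
    rw [← mul_assoc, ← mul_assoc, huu', one_mul, one_mul]
  · intro p _
    show (u' * (u * p.1), u' * (u * p.2)) = p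
    rw [← mul_assoc, ← mul_assoc, hu'u, one_mul, one_mul]

lemma key (n d : ℕ) [NeZero n] (hd : d ∣ n) :
    Nat.totient d *
      ((Spairs n).filter fun p => ZMod.castHom hd (ZMod d) (p.1 + p.2) = 1).card
      = (Spairs n).card := by
  haveI : NeZero d := ⟨fun h => NeZero.ne n (Nat.eq_zero_of_zero_dvd (h ▸ hd))⟩
  conv_rhs => rw [Finset.card_eq_sum_card_fiberwise
      (f := fun p : ZMod n × ZMod n => ZMod.castHom hd (ZMod d) (p.1 + p.2))
      (t := Finset.univ.filter fun t : ZMod d => IsUnit t)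
      (fun p hp => by
        rw [Spairs, Finset.mem_coe, Finset.mem_filter] at hp
        exact Finset.mem_filter.mpr ⟨Finset.mem_univ _, hp.2.2.2.map _⟩)]
  rw [Finset.sum_congr rfl
    (fun t ht => card_fiber_eq n d hd t (Finset.mem_filter.mp ht).2)]
  rw [Finset.sum_const, card_filter_isUnit, smul_eq_mul]

lemma cond_iff (n : ℕ) (a₁ a₂ : ℕ) :
    (Nat.gcd (a₁ * a₂) n = 1 ∧ Nat.gcd (a₁ + a₂) n = 1) ↔
      (IsUnit ((a₁ : ZMod n)) ∧ IsUnit ((a₂ : ZMod n)) ∧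
        IsUnit ((a₁ : ZMod n) + (a₂ : ZMod n))) := by
  rw [← Nat.coprime_iff_gcd_eq_one, ← Nat.coprime_iff_gcd_eq_one,
    ← ZMod.isUnit_iff_coprime, ← ZMod.isUnit_iff_coprime,
    Nat.cast_mul, Nat.cast_add, IsUnit.mul_iff, and_assoc]

lemma dvd_iff (n e : ℕ) (he : e ∣ n) (a₁ a₂ : ℕ) (h₁ : 1 ≤ a₁) :
    e ∣ (a₁ + a₂ - 1) ↔
      ZMod.castHom he (ZMod e) ((a₁ : ZMod n) + (a₂ : ZMod n)) = 1 := by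
  have hcast : ZMod.castHom he (ZMod e) ((a₁ : ZMod n) + (a₂ : ZMod n))
      = ((a₁ + a₂ : ℕ) : ZMod e) := by
    rw [← Nat.cast_add, map_natCast]
  rw [hcast, ← ZMod.natCast_eq_zero_iff]
  have hw : a₁ + a₂ = (a₁ + a₂ - 1) + 1 := by omega
  rw [hw]
  push_cast
  constructor
  · intro h; rw [h, zero_add]
  · intro h
    have := congrArg (· - (1 : ZMod e)) h
    simpa using this

lemma gcd_expand (n w G : ℕ) (hn : n ≠ 0) (hw : w ≠ 0) :
    Nat.gcd w (Nat.gcd G n) =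
      ∑ e ∈ n.divisors, if e ∣ w ∧ e ∣ G then Nat.totient e else 0 := by
  rw [← Finset.sum_filter]
  have hset : n.divisors.filter (fun e => e ∣ w ∧ e ∣ G)
      = (Nat.gcd w (Nat.gcd G n)).divisors := by
    ext e
    simp only [Finset.mem_filter, Nat.mem_divisors, Nat.dvd_gcd_iff]
    have hm : Nat.gcd w (Nat.gcd G n) ≠ 0 := fun h => hw (Nat.eq_zero_of_gcd_eq_zero_left h)
    constructor
    · rintro ⟨⟨hen, -⟩, hew, heG⟩; exact ⟨⟨hew, heG, hen⟩, hm⟩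
    · rintro ⟨⟨hew, heG, hen⟩, -⟩; exact ⟨⟨hen, hn⟩, hew, heG⟩
  rw [hset, Nat.sum_totient]

lemma count_b (n e s : ℕ) :
    ((Fintype.piFinset fun _ : Fin s => Finset.Icc 1 n).filter
      fun b => ∀ i, e ∣ b i).card = (n / e) ^ s := by
  have hIcc : Finset.Icc 1 n = Finset.Ioc 0 n := by
    ext a; rw [Finset.mem_Icc, Finset.mem_Ioc]; omega
  have hset : (Fintype.piFinset fun _ : Fin s => Finset.Icc 1 n).filter
        (fun b => ∀ i, e ∣ b i)
      = Fintype.piFinset fun _ : Fin s => (Finset.Icc 1 n).filter (e ∣ ·) := by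
    ext b
    simp only [Finset.mem_filter, Fintype.mem_piFinset, ← forall_and]
  rw [hset, Fintype.card_piFinset]
  rw [Finset.prod_congr rfl fun i _ => by rw [hIcc, Nat.Ioc_filter_dvd_card_eq_div]]
  simp

lemma sum_indicator_eq_card (n : ℕ) [NeZero n] (P : ZMod n × ZMod n → Prop)
    [DecidablePred P] :
    (∑ a₁ ∈ Finset.Icc 1 n, ∑ a₂ ∈ Finset.Icc 1 n,
      (if P ((a₁ : ZMod n), (a₂ : ZMod n)) then (1 : ℕ) else 0))
      = (Finset.univ.filter P).card := by
  calc (∑ a₁ ∈ Finset.Icc 1 n, ∑ a₂ ∈ Finset.Icc 1 n,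
        (if P ((a₁ : ZMod n), (a₂ : ZMod n)) then (1 : ℕ) else 0))
      = ∑ a₁ ∈ Finset.Icc 1 n, ∑ y : ZMod n,
          (if P ((a₁ : ZMod n), y) then (1 : ℕ) else 0) :=
        Finset.sum_congr rfl fun a₁ _ => sum_Icc_eq_sum_zmod n
          (fun y => if P ((a₁ : ZMod n), y) then (1 : ℕ) else 0)
    _ = ∑ x : ZMod n, ∑ y : ZMod n, (if P (x, y) then (1 : ℕ) else 0) :=
        sum_Icc_eq_sum_zmod n (fun x => ∑ y : ZMod n, if P (x, y) then (1 : ℕ) else 0)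
    _ = (Finset.univ.filter P).card := by
        rw [Finset.card_filter, ← Finset.sum_product', Finset.univ_product_univ]

lemma transfer_phi2 (n : ℕ) [NeZero n] : phi2 n = (Spairs n).card := by
  rw [phi2, Finset.card_filter, Finset.sum_product]
  rw [Finset.sum_congr rfl fun a₁ _ => Finset.sum_congr rfl fun a₂ _ =>
    if_congr (cond_iff n a₁ a₂) rfl rfl]
  exact (sum_indicator_eq_card n
    (fun p => IsUnit p.1 ∧ IsUnit p.2 ∧ IsUnit (p.1 + p.2))).trans rfl

lemma transfer_A (n e : ℕ) [NeZero n] (he : e ∣ n) :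
    (∑ a₁ ∈ Finset.Icc 1 n, ∑ a₂ ∈ Finset.Icc 1 n,
      (if (Nat.gcd (a₁ * a₂) n = 1 ∧ Nat.gcd (a₁ + a₂) n = 1) ∧ e ∣ (a₁ + a₂ - 1)
        then (1 : ℕ) else 0))
      = ((Spairs n).filter fun p => ZMod.castHom he (ZMod e) (p.1 + p.2) = 1).card := by
  rw [Spairs, Finset.filter_filter]
  rw [Finset.sum_congr rfl fun a₁ h₁ => Finset.sum_congr rfl fun a₂ h₂ =>
    if_congr (and_congr (cond_iff n a₁ a₂)
      (dvd_iff n e he a₁ a₂ (Finset.mem_Icc.mp h₁).1)) rfl rfl]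
  exact sum_indicator_eq_card n
    (fun p => (IsUnit p.1 ∧ IsUnit p.2 ∧ IsUnit (p.1 + p.2)) ∧
      ZMod.castHom he (ZMod e) (p.1 + p.2) = 1)

end MenonAux

open MenonAux in
/-- Generalized Menon–Sury identity (trivial character case): for `n ≥ 1` and
`s ≥ 0`, `∑ gcd(a₁+a₂-1, b₁, …, b_s, n) = φ₂(n) σ_s(n)`, summed over
`1 ≤ a₁, a₂, b₁, …, b_s ≤ n` with `gcd(a₁a₂, n) = 1`, `gcd(a₁+a₂, n) = 1`. -/
theorem menon_sury_generalized (n : ℕ) (hn : 0 < n) (s : ℕ) :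
    ∑ a₁ ∈ Finset.Icc 1 n, ∑ a₂ ∈ Finset.Icc 1 n,
      ∑ b ∈ Fintype.piFinset (fun _ : Fin s => Finset.Icc 1 n),
        (if Nat.gcd (a₁ * a₂) n = 1 ∧ Nat.gcd (a₁ + a₂) n = 1 then
          Nat.gcd (a₁ + a₂ - 1) (Nat.gcd (Finset.univ.gcd b) n)
        else 0)
      = phi2 n * ∑ d ∈ n.divisors, d ^ s := by
  haveI : NeZero n := ⟨hn.ne'⟩
  have hstep : ∀ a₁ ∈ Finset.Icc 1 n, ∀ a₂ ∈ Finset.Icc 1 n,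
      (∑ b ∈ Fintype.piFinset (fun _ : Fin s => Finset.Icc 1 n),
        (if Nat.gcd (a₁ * a₂) n = 1 ∧ Nat.gcd (a₁ + a₂) n = 1 then
          Nat.gcd (a₁ + a₂ - 1) (Nat.gcd (Finset.univ.gcd b) n)
        else 0))
      = ∑ e ∈ n.divisors,
          (if (Nat.gcd (a₁ * a₂) n = 1 ∧ Nat.gcd (a₁ + a₂) n = 1) ∧ e ∣ (a₁ + a₂ - 1)
            then Nat.totient e * (n / e) ^ s else 0) := by
    intro a₁ h₁ a₂ h₂
    rw [Finset.mem_Icc] at h₁ h₂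
    by_cases hc : Nat.gcd (a₁ * a₂) n = 1 ∧ Nat.gcd (a₁ + a₂) n = 1
    · have hw : a₁ + a₂ - 1 ≠ 0 := by omega
      simp only [hc, if_true, true_and]
      rw [Finset.sum_congr rfl fun b _ =>
        gcd_expand n (a₁ + a₂ - 1) (Finset.univ.gcd b) hn.ne' hw]
      rw [Finset.sum_comm]
      refine Finset.sum_congr rfl fun e he => ?_
      by_cases hew : e ∣ a₁ + a₂ - 1
      · simp only [hew, true_and, if_true]
        rw [← Finset.sum_filter, Finset.sum_const, smul_eq_mul, mul_comm]
        congr 1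
        have hfeq : (Fintype.piFinset fun _ : Fin s => Finset.Icc 1 n).filter
              (fun b => e ∣ Finset.univ.gcd b)
            = (Fintype.piFinset fun _ : Fin s => Finset.Icc 1 n).filter
              (fun b => ∀ i, e ∣ b i) := by
          apply Finset.filter_congr
          intro b _
          simp [Finset.dvd_gcd_iff]
        rw [hfeq]
        exact count_b n e s
      · simp [hew]
    · simp [hc]
  rw [Finset.sum_congr rfl fun a₁ h₁ => Finset.sum_congr rfl fun a₂ h₂ =>
    hstep a₁ h₁ a₂ h₂]
  rw [Finset.sum_congr rfl fun a₁ _ => Finset.sum_comm, Finset.sum_comm]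
  have hper : ∀ e ∈ n.divisors,
      (∑ a₁ ∈ Finset.Icc 1 n, ∑ a₂ ∈ Finset.Icc 1 n,
        (if (Nat.gcd (a₁ * a₂) n = 1 ∧ Nat.gcd (a₁ + a₂) n = 1) ∧ e ∣ (a₁ + a₂ - 1)
          then Nat.totient e * (n / e) ^ s else 0))
      = phi2 n * (n / e) ^ s := by
    intro e he
    have he' : e ∣ n := (Nat.mem_divisors.mp he).1
    have hsplit : ∀ a₁ a₂ : ℕ,
        (if (Nat.gcd (a₁ * a₂) n = 1 ∧ Nat.gcd (a₁ + a₂) n = 1) ∧ e ∣ (a₁ + a₂ - 1)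
          then Nat.totient e * (n / e) ^ s else 0)
        = Nat.totient e * (n / e) ^ s *
          (if (Nat.gcd (a₁ * a₂) n = 1 ∧ Nat.gcd (a₁ + a₂) n = 1) ∧ e ∣ (a₁ + a₂ - 1)
            then 1 else 0) := by
      intro a₁ a₂; split_ifs <;> simp
    rw [Finset.sum_congr rfl fun a₁ _ => Finset.sum_congr rfl fun a₂ _ => hsplit a₁ a₂]
    rw [Finset.sum_congr rfl fun a₁ _ => (Finset.mul_sum _ _ _).symm, ← Finset.mul_sum]
    rw [transfer_A n e he']
    rw [mul_comm (Nat.totient e) ((n / e) ^ s), mul_assoc, key n e he',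
      ← transfer_phi2 n, mul_comm]
  rw [Finset.sum_congr rfl hper, ← Finset.mul_sum,
    Nat.sum_div_divisors n (fun d => d ^ s)]
end
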